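/- arXiv:2411.15905 — 2 statements merged into one kernel-verified Lean document; each statement's English description precedes it below -/
import Mathlib

section
/- Assume L(ε) stabilizes at k ≥ 0. Then the formal power series φ(ε) := Σ_{i≥0} ε^i·φ_i transforms L(ε) into the triangular form S(ε) := L(ε)·φ(ε) = Σ_{l≥0} ε^l·S_{l+1}; that is, Σ_{i+j=l} L_i∘φ_j = S_{l+1} for every l ≥ 0. Moreover, for 1 ≤ i ≤ k+1 one has S_i(N_0^c + ⋯ + N_{i−1}^c) ⊆ R_{i−1}^c (with N_0^c := {0}), S_i(N_i^c) = R_i and S_i vanishes on N_i; for every l ≥ 2 the range of S_{k+l} is contained in R_{k+1}^c and S_{k+l} vanishes on N_{k+1}; and S_i vanishes on N_{k+1} for every i ≥ 1. -/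
/-!
The heart of the argument is the identity `∑_{i ≤ l} L_i ∘ M_{a+i, a+l} = S_{l+1}` for every
`a ≥ 1`, proved by induction on `a`. Expanding `M_{a+1+i, ·}` by its recursion and exchanging the
two sums reduces level `a + 1` to level `a`, the leftover terms being killed because
`E_{b+1, n}` lands in `N_b`. Level `1` is the identity `∑_v S̄_v ∘ E_{v,n} = S_n`, which holds
because `E` is built so that the `R_1, …, R_{n-1}` components of this sum cancel.

Consequently every `x ∈ N_m` is the root of the Jordan chain `(M_{m-t, m} x)_t`. Conversely,
subtracting this canonical chain from an arbitrary chain leaves a chain with root `0` whose tail is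
a shorter chain, and induction shows that `N_m` is exactly the set of roots of Jordan chains of
length `m`. Stabilization at `k` therefore forces `N_m = N_{k+1}` for `m > k`, so `R_m`, `N_m^c`,
`S_m^{-1}` and `E_{m,n}` vanish for `m ≥ k + 2`, whence `M_{a+1, n+1} = M_{a, n}` for `a > k`.
Thus `φ_{l-i} = M_{k+1+i, k+1+l}`, and the case `a = k + 1` of the identity is the triangular form.
-/

namespace Finset

variable {M : Type*} [AddCommMonoid M]

theorem sum_Icc_add_sum_Icc (f : ℕ → M) {a b c : ℕ} (hab : a ≤ b + 1) (hbc : b ≤ c) :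
    ∑ i ∈ Icc a b, f i + ∑ i ∈ Icc (b + 1) c, f i = ∑ i ∈ Icc a c, f i := by
  simp only [← Ico_add_one_right_eq_Icc]
  exact sum_Ico_consecutive f hab (by omega)

theorem sum_Icc_one_eq_sum_range (f : ℕ → M) (n : ℕ) :
    ∑ i ∈ Icc 1 n, f i = ∑ i ∈ range n, f (i + 1) := by
  rw [← Ico_add_one_right_eq_Icc, sum_Ico_eq_sum_range, Nat.add_sub_cancel]
  simp only [add_comm 1]

end Finset

section FlagProjections

open Finset

variable {𝕂 V : Type*} [Ring 𝕂] [AddCommGroup V] [Module 𝕂 V]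

def flagSup (R : ℕ → Submodule 𝕂 V) (n : ℕ) : Submodule 𝕂 V :=
  ⨆ j ∈ Icc 1 n, R j

variable {R Rc : ℕ → Submodule 𝕂 V} {P : ℕ → V →ₗ[𝕂] V}

theorem le_flagSup {j n : ℕ} (hj : 1 ≤ j) (hjn : j ≤ n) : R j ≤ flagSup R n :=
  le_iSup₂_of_le j (mem_Icc.mpr ⟨hj, hjn⟩) le_rfl

theorem flagSup_le {n : ℕ} {p : Submodule 𝕂 V} (h : ∀ j, 1 ≤ j → j ≤ n → R j ≤ p) :
    flagSup R n ≤ p :=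
  iSup₂_le fun j hj => h j (mem_Icc.mp hj).1 (mem_Icc.mp hj).2

theorem flagSup_mono : Monotone (flagSup R) := fun _ _ hmn =>
  flagSup_le fun _ hj hjm => le_flagSup hj (hjm.trans hmn)

/-- `P i` is the projection onto `R i` determined by `V = R 1 ⊕ ⋯ ⊕ R i ⊕ Rc i`. -/
structure IsFlagProjections (R Rc : ℕ → Submodule 𝕂 V) (P : ℕ → V →ₗ[𝕂] V) : Prop where
  Rc_zero : Rc 0 = ⊤
  R_sup_Rc : ∀ k, R (k + 1) ⊔ Rc (k + 1) = Rc k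
  range_le : ∀ i, 1 ≤ i → LinearMap.range (P i) ≤ R i
  apply_of_mem : ∀ i, 1 ≤ i → ∀ y ∈ R i, P i y = y
  apply_of_mem_Rc : ∀ i, 1 ≤ i → ∀ y ∈ Rc i, P i y = 0
  apply_of_mem_of_lt : ∀ i j, 1 ≤ j → j < i → ∀ y ∈ R j, P i y = 0

namespace IsFlagProjections

theorem Rc_antitone (h : IsFlagProjections R Rc P) : Antitone Rc :=
  antitone_nat_of_succ_le fun k => h.R_sup_Rc k ▸ le_sup_right

theorem R_le_Rc (h : IsFlagProjections R Rc P) {j t : ℕ} (htj : t < j) : R j ≤ Rc t := by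
  obtain ⟨u, rfl⟩ := Nat.exists_eq_add_of_lt htj
  exact (h.R_sup_Rc _ ▸ le_sup_left).trans (h.Rc_antitone (Nat.le_add_right t u))

theorem apply_mem (h : IsFlagProjections R Rc P) {i : ℕ} (hi : 1 ≤ i) (y : V) : P i y ∈ R i :=
  h.range_le i hi ⟨y, rfl⟩

theorem apply_apply_self (h : IsFlagProjections R Rc P) {i : ℕ} (hi : 1 ≤ i) (y : V) :
    P i (P i y) = P i y :=
  h.apply_of_mem i hi _ (h.apply_mem hi y)

theorem apply_eq_zero_of_mem_R (h : IsFlagProjections R Rc P) {i j : ℕ} (hi : 1 ≤ i)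
    (hj : 1 ≤ j) (hij : j ≠ i) {y : V} (hy : y ∈ R j) : P i y = 0 := by
  rcases Nat.lt_or_gt_of_ne hij with hlt | hgt
  · exact h.apply_of_mem_of_lt i j hj hlt y hy
  · exact h.apply_of_mem_Rc i hi y (h.R_le_Rc hgt hy)

theorem apply_apply_of_ne (h : IsFlagProjections R Rc P) {i j : ℕ} (hi : 1 ≤ i) (hj : 1 ≤ j)
    (hij : j ≠ i) (y : V) : P i (P j y) = 0 :=
  h.apply_eq_zero_of_mem_R hi hj hij (h.apply_mem hj y)

theorem apply_eq_zero_of_mem_flagSup (h : IsFlagProjections R Rc P) {i n : ℕ} (hni : n < i)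
    {w : V} (hw : w ∈ flagSup R n) : P i w = 0 :=
  flagSup_le (p := LinearMap.ker (P i))
    (fun j hj hjn y hy => h.apply_of_mem_of_lt i j hj (by omega) y hy) hw

theorem sum_apply_of_mem_flagSup (h : IsFlagProjections R Rc P) {n : ℕ} {w : V}
    (hw : w ∈ flagSup R n) : ∑ j ∈ Icc 1 n, P j w = w := by
  have hfix : flagSup R n ≤ LinearMap.ker (∑ j ∈ Icc 1 n, P j - LinearMap.id) := by
    refine flagSup_le fun t ht htn y hy => ?_
    have hsum : ∑ j ∈ Icc 1 n, P j y = P t y :=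
      sum_eq_single_of_mem t (mem_Icc.mpr ⟨ht, htn⟩) fun j hj hjt =>
        h.apply_eq_zero_of_mem_R (mem_Icc.mp hj).1 ht (Ne.symm hjt) hy
    simp [hsum, h.apply_of_mem t ht y hy]
  simpa [sub_eq_zero] using hfix hw

theorem sub_sum_apply_mem_Rc (h : IsFlagProjections R Rc P) (n : ℕ) (y : V) :
    y - ∑ j ∈ Icc 1 n, P j y ∈ Rc n := by
  induction n with
  | zero => simp [h.Rc_zero]
  | succ n ih =>
    rw [← h.R_sup_Rc n] at ih
    obtain ⟨r, hr, c, hc, hrc⟩ := Submodule.mem_sup.mp ih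
    have hP : P (n + 1) y = r := by
      have hkill : P (n + 1) (∑ j ∈ Icc 1 n, P j y) = 0 := by
        rw [map_sum]
        exact sum_eq_zero fun j hj =>
          h.apply_apply_of_ne (by omega) (mem_Icc.mp hj).1 (by have := (mem_Icc.mp hj).2; omega) y
      have := congrArg (P (n + 1)) hrc
      rwa [map_add, map_sub, hkill, sub_zero, h.apply_of_mem _ (by omega) r hr,
        h.apply_of_mem_Rc _ (by omega) c hc, add_zero, eq_comm] at this
    rw [sum_Icc_succ_top (by omega), hP]
    convert hc using 1
    rw [← sub_eq_of_eq_add' hrc.symm]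
    abel

end IsFlagProjections

end FlagProjections

section JordanChains

open Finset

variable {𝕂 B B' : Type*} [Ring 𝕂] [AddCommGroup B] [Module 𝕂 B] [AddCommGroup B'] [Module 𝕂 B']

def IsJordanChain (L : ℕ → B →ₗ[𝕂] B') (m : ℕ) (b : ℕ → B) : Prop :=
  ∀ l, l + 1 ≤ m → ∑ i ∈ range (l + 1), L i (b (l - i)) = 0

/-- `sSup ∅ = 0` gives rank `0` exactly when `L 0 b₀ ≠ 0`, as in the paper. -/
noncomputable def jordanRank (L : ℕ → B →ₗ[𝕂] B') (b₀ : B) : ℕ∞ :=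
  sSup {x : ℕ∞ | ∃ m : ℕ, 1 ≤ m ∧ (∃ b : ℕ → B, b 0 = b₀ ∧ IsJordanChain L m b) ∧ x = (m : ℕ∞)}

variable {L : ℕ → B →ₗ[𝕂] B'} {m n : ℕ} {b c : ℕ → B}

theorem IsJordanChain.mono (hb : IsJordanChain L m b) (hnm : n ≤ m) : IsJordanChain L n b :=
  fun l hl => hb l (hl.trans hnm)

theorem IsJordanChain.sub (hb : IsJordanChain L m b) (hc : IsJordanChain L m c) :
    IsJordanChain L m (b - c) := fun l hl => by
  simp only [Pi.sub_apply, map_sub, sum_sub_distrib, hb l hl, hc l hl, sub_zero]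

theorem IsJordanChain.tail (hb : IsJordanChain L (m + 1) b) (hb₀ : b 0 = 0) :
    IsJordanChain L m (fun t => b (t + 1)) := fun l hl => by
  have h := hb (l + 1) (by omega)
  rw [sum_range_succ, Nat.sub_self, hb₀, map_zero, add_zero] at h
  rw [← h]
  exact sum_congr rfl fun i hi => by
    rw [Nat.sub_add_comm (Nat.lt_succ_iff.mp (mem_range.mp hi))]

theorem le_jordanRank {b₀ : B} (hm : 1 ≤ m) (hb₀ : b 0 = b₀) (hb : IsJordanChain L m b) :
    (m : ℕ∞) ≤ jordanRank L b₀ :=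
  le_sSup ⟨m, hm, ⟨b, hb₀, hb⟩, rfl⟩

theorem exists_isJordanChain_of_jordanRank_eq_top {b₀ : B} (hb₀ : jordanRank L b₀ = ⊤) (m : ℕ) :
    ∃ b : ℕ → B, b 0 = b₀ ∧ IsJordanChain L m b := by
  by_contra hno
  have hle : jordanRank L b₀ ≤ m := by
    refine sSup_le ?_
    rintro _ ⟨m', -, ⟨b, hb0, hb⟩, rfl⟩
    by_contra hlt
    exact hno ⟨b, hb0, hb.mono (by exact_mod_cast (not_le.mp hlt).le)⟩
  exact ENat.natCast_ne_top m (top_le_iff.mp (hb₀ ▸ hle))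

end JordanChains

section Recursion

open Finset

variable {𝕂 B B' : Type*} [Ring 𝕂] [AddCommGroup B] [Module 𝕂 B] [AddCommGroup B'] [Module 𝕂 B']

/-- The recursion defining `S̄ = Sb`, `S`, `N`, `Nc`, `R`, `Rc`, `𝒫 = P`, `E` and `M`, where
`T i` stands for `S_i⁻¹ ∘ 𝒫_i`. -/
structure IsTriangularRecursion (L Sb S : ℕ → B →ₗ[𝕂] B') (N Nc : ℕ → Submodule 𝕂 B)
    (R Rc : ℕ → Submodule 𝕂 B') (P : ℕ → B' →ₗ[𝕂] B') (T : ℕ → B' →ₗ[𝕂] B)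
    (E M : ℕ → ℕ → B →ₗ[𝕂] B) : Prop extends IsFlagProjections R Rc P where
  N_zero : N 0 = ⊤
  Sb_one : Sb 1 = L 0
  Sb_succ : ∀ k, 1 ≤ k → Sb (k + 1) = ∑ i ∈ Icc 1 k, (L i).comp (M i k)
  S_succ : ∀ k, S (k + 1) = Sb (k + 1) - ∑ i ∈ Icc 1 k, (P i).comp (Sb (k + 1))
  N_succ : ∀ k, N (k + 1) = LinearMap.ker (S (k + 1)) ⊓ N k
  R_succ : ∀ k, R (k + 1) = Submodule.map (S (k + 1)) (N k)
  Nc_succ : ∀ k, Disjoint (Nc (k + 1)) (N (k + 1)) ∧ Nc (k + 1) ⊔ N (k + 1) = N k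
  T_mem : ∀ i, 1 ≤ i → ∀ y, T i y ∈ Nc i
  S_T : ∀ i, 1 ≤ i → ∀ y, S i (T i y) = P i y
  E_diag : ∀ k, E (k + 1) (k + 1) = LinearMap.id
  E_succ : ∀ k i, 1 ≤ i → i ≤ k →
    E i (k + 1) = -((T i).comp (∑ v ∈ Icc (i + 1) (k + 1), (Sb v).comp (E v (k + 1))))
  M_one_one : M 1 1 = LinearMap.id
  M_one_succ : ∀ k, 1 ≤ k → M 1 (k + 1) = E 1 (k + 1)
  M_succ : ∀ k a, 2 ≤ a → a ≤ k + 1 →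
    M a (k + 1) = ∑ b ∈ Icc (a - 1) k, (M (a - 1) b).comp (E (b + 1) (k + 1))

namespace IsTriangularRecursion

variable {L Sb S : ℕ → B →ₗ[𝕂] B'} {N Nc : ℕ → Submodule 𝕂 B} {R Rc : ℕ → Submodule 𝕂 B'}
  {P : ℕ → B' →ₗ[𝕂] B'} {T : ℕ → B' →ₗ[𝕂] B} {E M : ℕ → ℕ → B →ₗ[𝕂] B}

theorem S_one (h : IsTriangularRecursion L Sb S N Nc R Rc P T E M) : S 1 = L 0 := by
  simpa [h.Sb_one] using h.S_succ 0

theorem S_succ_apply (h : IsTriangularRecursion L Sb S N Nc R Rc P T E M) (u : ℕ) (x : B) :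
    S (u + 1) x = Sb (u + 1) x - ∑ j ∈ Icc 1 u, P j (Sb (u + 1) x) := by
  simp [h.S_succ u]

theorem Sb_succ_apply (h : IsTriangularRecursion L Sb S N Nc R Rc P T E M) {k : ℕ} (hk : 1 ≤ k)
    (x : B) : Sb (k + 1) x = ∑ i ∈ Icc 1 k, L i (M i k x) := by
  simp [h.Sb_succ k hk]

theorem E_succ_apply (h : IsTriangularRecursion L Sb S N Nc R Rc P T E M) {k i : ℕ} (hi : 1 ≤ i)
    (hik : i ≤ k) (x : B) :
    E i (k + 1) x = -T i (∑ v ∈ Icc (i + 1) (k + 1), Sb v (E v (k + 1) x)) := by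
  simp [h.E_succ k i hi hik]

theorem M_succ_apply (h : IsTriangularRecursion L Sb S N Nc R Rc P T E M) {k a : ℕ} (ha : 1 ≤ a)
    (hak : a ≤ k) (x : B) : M (a + 1) (k + 1) x = ∑ b ∈ Icc a k, M a b (E (b + 1) (k + 1) x) := by
  simp [h.M_succ k (a + 1) (by omega) (by omega)]

theorem M_diag (h : IsTriangularRecursion L Sb S N Nc R Rc P T E M) {m : ℕ} (hm : 1 ≤ m) :
    M m m = LinearMap.id := by
  induction m with
  | zero => omega
  | succ m ih =>
    rcases Nat.eq_zero_or_pos m with rfl | hm'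
    · exact h.M_one_one
    · ext x
      simp [h.M_succ_apply hm' le_rfl, ih hm', h.E_diag]

theorem S_succ_mem_Rc (h : IsTriangularRecursion L Sb S N Nc R Rc P T E M) (u : ℕ) (x : B) :
    S (u + 1) x ∈ Rc u := by
  rw [h.S_succ_apply]
  exact h.sub_sum_apply_mem_Rc u _

theorem N_antitone (h : IsTriangularRecursion L Sb S N Nc R Rc P T E M) : Antitone N :=
  antitone_nat_of_succ_le fun k => h.N_succ k ▸ inf_le_right

theorem Nc_le_N (h : IsTriangularRecursion L Sb S N Nc R Rc P T E M) (u : ℕ) : Nc (u + 1) ≤ N u :=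
  (h.Nc_succ u).2 ▸ le_sup_left

theorem S_apply_eq_zero_of_mem_N (h : IsTriangularRecursion L Sb S N Nc R Rc P T E M) {j m : ℕ}
    (hj : 1 ≤ j) (hjm : j ≤ m) {x : B} (hx : x ∈ N m) : S j x = 0 := by
  obtain ⟨u, rfl⟩ := Nat.exists_eq_add_of_le' hj
  have hx' := h.N_antitone hjm hx
  rw [h.N_succ u] at hx'
  exact hx'.1

theorem L_zero_apply_mem_R_one (h : IsTriangularRecursion L Sb S N Nc R Rc P T E M) (y : B) :
    L 0 y ∈ R 1 := by
  rw [h.R_succ 0, h.S_one, h.N_zero]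
  exact Submodule.mem_map_of_mem Submodule.mem_top

theorem Sb_succ_mem_flagSup (h : IsTriangularRecursion L Sb S N Nc R Rc P T E M) {u : ℕ} {x : B}
    (hx : x ∈ N u) : Sb (u + 1) x ∈ flagSup R (u + 1) := by
  have hSb : Sb (u + 1) x = S (u + 1) x + ∑ j ∈ Icc 1 u, P j (Sb (u + 1) x) := by
    rw [h.S_succ_apply]; abel
  rw [hSb]
  refine Submodule.add_mem _ (le_flagSup le_add_self le_rfl ?_) (Submodule.sum_mem _ fun j hj => ?_)
  · rw [h.R_succ u]
    exact Submodule.mem_map_of_mem hx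
  · obtain ⟨hj1, hju⟩ := mem_Icc.mp hj
    exact le_flagSup hj1 (by omega) (h.apply_mem hj1 _)

theorem S_succ_eq_zero_of_Sb_mem_flagSup (h : IsTriangularRecursion L Sb S N Nc R Rc P T E M)
    {u : ℕ} {x : B} (hx : Sb (u + 1) x ∈ flagSup R u) : S (u + 1) x = 0 := by
  rw [h.S_succ_apply, h.sum_apply_of_mem_flagSup hx, sub_self]

theorem P_apply_Sb (h : IsTriangularRecursion L Sb S N Nc R Rc P T E M) (u : ℕ) (y : B) :
    P (u + 1) (Sb (u + 1) y) = P (u + 1) (S (u + 1) y) := by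
  rw [h.S_succ_apply, map_sub, map_sum, sum_eq_zero fun j hj => ?_, sub_zero]
  obtain ⟨hj1, hju⟩ := mem_Icc.mp hj
  exact h.apply_apply_of_ne le_add_self hj1 (by omega) _

theorem E_apply_mem_Nc (h : IsTriangularRecursion L Sb S N Nc R Rc P T E M) {i n : ℕ}
    (hi : 1 ≤ i) (hin : i < n) (x : B) : E i n x ∈ Nc i := by
  obtain ⟨k, rfl⟩ := Nat.exists_eq_add_of_le' (hi.trans_lt hin)
  rw [h.E_succ_apply hi (by omega)]
  exact Submodule.neg_mem _ (h.T_mem i hi _)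

theorem E_apply_mem_N (h : IsTriangularRecursion L Sb S N Nc R Rc P T E M) {u n : ℕ}
    (hun : u + 1 < n) (x : B) : E (u + 1) n x ∈ N u :=
  h.Nc_le_N u (h.E_apply_mem_Nc le_add_self hun x)

theorem sum_Sb_E_mem_flagSup (h : IsTriangularRecursion L Sb S N Nc R Rc P T E M) {t n : ℕ}
    (htn : t ≤ n) (x : B) : ∑ v ∈ Icc 1 t, Sb v (E v (n + 1) x) ∈ flagSup R t :=
  Submodule.sum_mem _ fun v hv => by
    obtain ⟨hv1, hvt⟩ := mem_Icc.mp hv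
    obtain ⟨u, rfl⟩ := Nat.exists_eq_add_of_le' hv1
    exact flagSup_mono hvt (h.Sb_succ_mem_flagSup (h.E_apply_mem_N (by omega) x))

/-- This is what `E_{i,n+1} = -S_i⁻¹ 𝒫_i (∑_{v > i} S̄_v E_{v,n+1})` is designed for. -/
theorem P_apply_sum_Sb_E (h : IsTriangularRecursion L Sb S N Nc R Rc P T E M) {i n : ℕ}
    (hi : 1 ≤ i) (hin : i ≤ n) (x : B) :
    P i (∑ v ∈ Icc 1 (n + 1), Sb v (E v (n + 1) x)) = 0 := by
  obtain ⟨t, rfl⟩ := Nat.exists_eq_add_of_le' hi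
  set f : ℕ → B' := fun v => Sb v (E v (n + 1) x)
  set g := ∑ v ∈ Icc (t + 1 + 1) (n + 1), f v
  have hsplit : ∑ v ∈ Icc 1 (n + 1), f v = ∑ v ∈ Icc 1 t, f v + (f (t + 1) + g) := by
    rw [← sum_Icc_add_sum_Icc f (by omega : 1 ≤ t + 1) (by omega : t ≤ n + 1),
      ← sum_Icc_add_sum_Icc f (Nat.le_succ (t + 1)) (by omega : t + 1 ≤ n + 1), Icc_self,
      sum_singleton]
  have hlow : ∑ v ∈ Icc 1 t, f v ∈ flagSup R t := h.sum_Sb_E_mem_flagSup (by omega) x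
  have hdiag : P (t + 1) (f (t + 1)) = -P (t + 1) g := by
    simp only [f, h.P_apply_Sb, h.E_succ_apply le_add_self hin, map_neg,
      h.S_T _ le_add_self, h.apply_apply_self le_add_self]
    rfl
  rw [hsplit, map_add, map_add, h.apply_eq_zero_of_mem_flagSup (Nat.lt_succ_self t) hlow, hdiag,
    zero_add, neg_add_cancel]

theorem sum_Sb_E_apply (h : IsTriangularRecursion L Sb S N Nc R Rc P T E M) (n : ℕ) (x : B) :
    ∑ v ∈ Icc 1 (n + 1), Sb v (E v (n + 1) x) = S (n + 1) x := by
  set D := ∑ v ∈ Icc 1 (n + 1), Sb v (E v (n + 1) x)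
  set w := ∑ v ∈ Icc 1 n, Sb v (E v (n + 1) x)
  have hw : w ∈ flagSup R n := h.sum_Sb_E_mem_flagSup le_rfl x
  have hSb : Sb (n + 1) x = D - w := by
    simp [D, w, sum_Icc_succ_top, h.E_diag]
  have hPD : ∑ j ∈ Icc 1 n, P j D = 0 := sum_eq_zero fun j hj =>
    h.P_apply_sum_Sb_E (mem_Icc.mp hj).1 (mem_Icc.mp hj).2 x
  rw [h.S_succ_apply, hSb]
  simp only [map_sub, sum_sub_distrib, hPD, h.sum_apply_of_mem_flagSup hw]
  abel

theorem sum_L_M_one_apply (h : IsTriangularRecursion L Sb S N Nc R Rc P T E M) (l : ℕ) (x : B) :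
    ∑ i ∈ range (l + 1), L i (M (i + 1) (l + 1) x) = S (l + 1) x := by
  rcases l with _ | n
  · simp [h.M_one_one, h.S_one]
  have hterm : ∀ i ∈ Icc 1 (n + 1), L i (M (i + 1) (n + 1 + 1) x)
      = ∑ b ∈ Icc i (n + 1), L i (M i b (E (b + 1) (n + 1 + 1) x)) := fun i hi => by
    rw [h.M_succ_apply (mem_Icc.mp hi).1 (mem_Icc.mp hi).2, map_sum]
  have hswap : ∑ i ∈ Icc 1 (n + 1), ∑ b ∈ Icc i (n + 1), L i (M i b (E (b + 1) (n + 1 + 1) x))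
      = ∑ b ∈ Icc 1 (n + 1), Sb (b + 1) (E (b + 1) (n + 1 + 1) x) := by
    rw [sum_comm' (t' := Icc 1 (n + 1)) (s' := fun b => Icc 1 b)
      (fun i b => by simp only [mem_Icc]; omega)]
    exact sum_congr rfl fun b hb => (h.Sb_succ_apply (mem_Icc.mp hb).1 _).symm
  rw [sum_range_succ', ← sum_Icc_one_eq_sum_range (fun i => L i (M (i + 1) (n + 1 + 1) x)),
    sum_congr rfl hterm, hswap, zero_add, h.M_one_succ _ le_add_self, ← h.Sb_one,
    ← h.sum_Sb_E_apply, sum_Icc_one_eq_sum_range, sum_Icc_one_eq_sum_range,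
    sum_range_succ' _ (n + 1)]

theorem sum_L_M_succ_apply (h : IsTriangularRecursion L Sb S N Nc R Rc P T E M) {a : ℕ}
    (ha : 1 ≤ a) (ih : ∀ l x, ∑ i ∈ range (l + 1), L i (M (a + i) (a + l) x) = S (l + 1) x)
    (l : ℕ) (x : B) :
    ∑ i ∈ range (l + 1), L i (M (a + 1 + i) (a + 1 + l) x) = S (l + 1) x := by
  set e : ℕ → B := fun j => E (a + j + 1) (a + l + 1) x
  have hterm : ∀ i ∈ range (l + 1), L i (M (a + 1 + i) (a + 1 + l) x)
      = ∑ j ∈ Icc i l, L i (M (a + i) (a + j) (e j)) := fun i hi => by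
    have hil := Nat.lt_succ_iff.mp (mem_range.mp hi)
    rw [add_right_comm a 1 i, add_right_comm a 1 l, h.M_succ_apply (by omega) (by omega),
      ← map_add_left_Icc i l a, sum_map, map_sum]
    rfl
  have hswap : ∑ i ∈ range (l + 1), ∑ j ∈ Icc i l, L i (M (a + i) (a + j) (e j))
      = ∑ j ∈ range (l + 1), S (j + 1) (e j) := by
    rw [sum_comm' (t' := range (l + 1)) (s' := fun j => range (j + 1))
      (fun i j => by simp only [mem_Icc, mem_range]; omega)]
    exact sum_congr rfl fun j _ => ih j (e j)
  have hlow : ∀ j ∈ range l, S (j + 1) (e j) = 0 := fun j hj =>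
    h.S_apply_eq_zero_of_mem_N le_add_self (by omega)
      (h.E_apply_mem_N (by have := mem_range.mp hj; omega) x)
  rw [sum_congr rfl hterm, hswap, sum_range_succ, sum_eq_zero hlow, zero_add]
  simp [e, h.E_diag]

theorem sum_L_M_apply (h : IsTriangularRecursion L Sb S N Nc R Rc P T E M) {a : ℕ} (ha : 1 ≤ a)
    (l : ℕ) (x : B) : ∑ i ∈ range (l + 1), L i (M (a + i) (a + l) x) = S (l + 1) x := by
  induction a, ha using Nat.le_induction generalizing l x with
  | base => simpa only [add_comm 1] using h.sum_L_M_one_apply l x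
  | succ a ha ih => exact h.sum_L_M_succ_apply ha ih l x

theorem isJordanChain_M (h : IsTriangularRecursion L Sb S N Nc R Rc P T E M) {m : ℕ} {x : B}
    (hx : x ∈ N m) : IsJordanChain L m (fun t => M (m - t) m x) := fun l hl => by
  obtain ⟨a, rfl⟩ : ∃ a, m = a + l := ⟨m - l, by omega⟩
  have hterm : ∀ i ∈ range (l + 1), L i (M (a + l - (l - i)) (a + l) x)
      = L i (M (a + i) (a + l) x) := fun i hi => by
    rw [show a + l - (l - i) = a + i by have := mem_range.mp hi; omega]
  rw [sum_congr rfl hterm, h.sum_L_M_apply (by omega) l x]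
  exact h.S_apply_eq_zero_of_mem_N le_add_self (by omega) hx

/-- Subtracting the canonical chain `(M_{m+1-t, m+1} e₀)_t` from `e` leaves a chain with root `0`,
whose tail is a chain of length `m`. -/
theorem sum_L_sub_Sb_mem_flagSup (h : IsTriangularRecursion L Sb S N Nc R Rc P T E M) {m : ℕ}
    (hroot : ∀ b, IsJordanChain L (m + 1) b → b 0 ∈ N (m + 1))
    (htail : ∀ e, IsJordanChain L m e → ∑ i ∈ Icc 1 m, L i (e (m - i)) ∈ flagSup R (m + 1))
    {e : ℕ → B} (he : IsJordanChain L (m + 1) e) :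
    ∑ i ∈ Icc 1 (m + 1), L i (e (m + 1 - i)) - Sb (m + 1 + 1) (e 0) ∈ flagSup R (m + 1) := by
  set c : ℕ → B := fun t => M (m + 1 - t) (m + 1) (e 0)
  have hc : IsJordanChain L (m + 1) c := h.isJordanChain_M (hroot e he)
  have hd0 : (e - c) 0 = 0 := by simp [c, h.M_diag le_add_self]
  have hSb : Sb (m + 1 + 1) (e 0) = ∑ i ∈ Icc 1 (m + 1), L i (c (m + 1 - i)) := by
    rw [h.Sb_succ_apply le_add_self]
    exact sum_congr rfl fun i hi => by simp only [c, Nat.sub_sub_self (mem_Icc.mp hi).2]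
  have hdiff : ∑ i ∈ Icc 1 (m + 1), L i (e (m + 1 - i)) - Sb (m + 1 + 1) (e 0)
      = ∑ i ∈ Icc 1 m, L i ((fun t => (e - c) (t + 1)) (m - i)) := by
    rw [hSb, ← sum_sub_distrib, sum_Icc_succ_top (by omega), Nat.sub_self, ← map_sub,
      ← Pi.sub_apply, hd0, map_zero, add_zero]
    exact sum_congr rfl fun i hi => by
      rw [← map_sub, Nat.sub_add_comm (mem_Icc.mp hi).2]
      rfl
  rw [hdiff]
  exact htail _ ((he.sub hc).tail hd0)

theorem mem_N_and_sum_mem_flagSup (h : IsTriangularRecursion L Sb S N Nc R Rc P T E M) (m : ℕ) :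
    (∀ b, IsJordanChain L (m + 1) b → b 0 ∈ N (m + 1)) ∧
      ∀ e, IsJordanChain L m e → ∑ i ∈ Icc 1 m, L i (e (m - i)) ∈ flagSup R (m + 1) := by
  induction m with
  | zero =>
    refine ⟨fun b hb => ?_, fun e _ => by simp⟩
    have hL0 : L 0 (b 0) = 0 := by simpa using hb 0 le_rfl
    rw [h.N_succ, h.N_zero, h.S_one]
    exact ⟨hL0, Submodule.mem_top⟩
  | succ m ih =>
    obtain ⟨hroot, htail⟩ := ih
    refine ⟨fun b hb => ?_, fun e he => ?_⟩
    · have key := h.sum_L_sub_Sb_mem_flagSup hroot htail (hb.mono (Nat.le_succ _))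
      have htop : ∑ i ∈ Icc 1 (m + 1), L i (b (m + 1 - i)) = -L 0 (b (m + 1)) := by
        have := hb (m + 1) le_rfl
        rw [sum_range_succ', ← sum_Icc_one_eq_sum_range (fun i => L i (b (m + 1 - i)))] at this
        exact eq_neg_of_add_eq_zero_left this
      have hSb : Sb (m + 1 + 1) (b 0) ∈ flagSup R (m + 1) := by
        have hL0 := le_flagSup (R := R) (n := m + 1) le_rfl (by omega)
          (h.L_zero_apply_mem_R_one (b (m + 1)))
        convert Submodule.sub_mem _ (Submodule.neg_mem _ hL0) key using 1
        rw [htop]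
        abel
      rw [h.N_succ]
      exact ⟨h.S_succ_eq_zero_of_Sb_mem_flagSup hSb, hroot b (hb.mono (Nat.le_succ _))⟩
    · have key := h.sum_L_sub_Sb_mem_flagSup hroot htail he
      convert Submodule.add_mem _ (flagSup_mono (Nat.le_succ _) key)
        (h.Sb_succ_mem_flagSup (hroot e he)) using 1
      abel

theorem mem_N_of_isJordanChain (h : IsTriangularRecursion L Sb S N Nc R Rc P T E M) {m : ℕ}
    {b : ℕ → B} (hb : IsJordanChain L m b) : b 0 ∈ N m := by
  rcases m with _ | m
  · simp [h.N_zero]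
  · exact (h.mem_N_and_sum_mem_flagSup m).1 b hb

theorem range_S_succ_le (h : IsTriangularRecursion L Sb S N Nc R Rc P T E M) (u : ℕ) :
    LinearMap.range (S (u + 1)) ≤ Rc u := by
  rintro _ ⟨x, rfl⟩
  exact h.S_succ_mem_Rc u x

theorem map_S_Nc (h : IsTriangularRecursion L Sb S N Nc R Rc P T E M) (u : ℕ) :
    Submodule.map (S (u + 1)) (Nc (u + 1)) = R (u + 1) := by
  have hker : Submodule.map (S (u + 1)) (N (u + 1)) = ⊥ :=
    LinearMap.le_ker_iff_map.mp fun _ hx =>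
      LinearMap.mem_ker.mpr (h.S_apply_eq_zero_of_mem_N le_add_self le_rfl hx)
  rw [h.R_succ u, ← (h.Nc_succ u).2, Submodule.map_sup, hker, sup_bot_eq]

variable {k : ℕ}

theorem N_eq_of_jordanRank (h : IsTriangularRecursion L Sb S N Nc R Rc P T E M)
    (hstab : ∀ b₀, jordanRank L b₀ ≤ k ∨ jordanRank L b₀ = ⊤) {m : ℕ} (hm : k + 1 ≤ m) :
    N m = N (k + 1) := by
  refine le_antisymm (h.N_antitone hm) fun x hx => ?_
  rcases hstab x with hle | htop
  · have hlt := (le_jordanRank le_add_self (by simp [h.M_diag le_add_self])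
      (h.isJordanChain_M hx)).trans hle
    exact absurd (Nat.cast_le.mp hlt) (Nat.not_succ_le_self k)
  · obtain ⟨b, rfl, hb⟩ := exists_isJordanChain_of_jordanRank_eq_top htop m
    exact h.mem_N_of_isJordanChain hb

theorem S_apply_eq_zero_of_stable (h : IsTriangularRecursion L Sb S N Nc R Rc P T E M)
    (hN : ∀ m, k + 1 ≤ m → N m = N (k + 1)) {j : ℕ} (hj : 1 ≤ j) {x : B} (hx : x ∈ N (k + 1)) :
    S j x = 0 :=
  h.S_apply_eq_zero_of_mem_N hj (le_max_left j (k + 1)) (hN _ (le_max_right _ _) ▸ hx)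

theorem T_eq_zero_of_stable (h : IsTriangularRecursion L Sb S N Nc R Rc P T E M)
    (hN : ∀ m, k + 1 ≤ m → N m = N (k + 1)) {i : ℕ} (hi : k + 2 ≤ i) : T i = 0 := by
  obtain ⟨u, rfl⟩ := Nat.exists_eq_add_of_le' (by omega : 1 ≤ i)
  have hNc : Nc (u + 1) = ⊥ := (h.Nc_succ u).1.eq_bot_of_le <| (h.Nc_le_N u).trans
    (by rw [hN u (by omega), hN (u + 1) (by omega)])
  ext y
  simpa [hNc] using h.T_mem (u + 1) le_add_self y

theorem M_succ_succ_of_stable (h : IsTriangularRecursion L Sb S N Nc R Rc P T E M)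
    (hN : ∀ m, k + 1 ≤ m → N m = N (k + 1)) {a n : ℕ} (ha : k + 1 ≤ a) (han : a ≤ n) :
    M (a + 1) (n + 1) = M a n := by
  ext x
  rw [h.M_succ_apply (by omega) han,
    sum_eq_single_of_mem n (mem_Icc.mpr ⟨han, le_rfl⟩) fun b hb hbn => ?_, h.E_diag,
    LinearMap.id_apply]
  obtain ⟨hab, hbn'⟩ := mem_Icc.mp hb
  rw [h.E_succ_apply le_add_self (lt_of_le_of_ne hbn' hbn), h.T_eq_zero_of_stable hN (by omega)]
  simp

theorem M_add_add_of_stable (h : IsTriangularRecursion L Sb S N Nc R Rc P T E M)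
    (hN : ∀ m, k + 1 ≤ m → N m = N (k + 1)) (i j : ℕ) :
    M (k + 1 + i) (k + 1 + i + j) = M (k + 1) (k + 1 + j) := by
  induction i with
  | zero => rfl
  | succ i ih =>
    rw [← ih, ← add_assoc, show k + 1 + i + 1 + j = k + 1 + i + j + 1 by omega,
      h.M_succ_succ_of_stable hN (by omega) (by omega)]

theorem sum_L_comp_M_of_stable (h : IsTriangularRecursion L Sb S N Nc R Rc P T E M)
    (hN : ∀ m, k + 1 ≤ m → N m = N (k + 1)) (l : ℕ) :
    ∑ i ∈ range (l + 1), (L i).comp (M (k + 1) (k + 1 + (l - i))) = S (l + 1) := by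
  ext x
  rw [← h.sum_L_M_apply (Nat.le_add_left 1 k) l x, LinearMap.sum_apply]
  refine sum_congr rfl fun i hi => ?_
  rw [LinearMap.comp_apply, ← h.M_add_add_of_stable hN i (l - i),
    show k + 1 + i + (l - i) = k + 1 + l by have := mem_range.mp hi; omega]

end IsTriangularRecursion

end Recursion

theorem stmt_9_general
    {𝕂 : Type*} [RCLike 𝕂]
    {B B' : Type*} [AddCommGroup B] [Module 𝕂 B]
    [AddCommGroup B'] [Module 𝕂 B']
    (L : ℕ → B →ₗ[𝕂] B')
    (Sb S : ℕ → B →ₗ[𝕂] B')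
    (N Nc : ℕ → Submodule 𝕂 B)
    (R Rc : ℕ → Submodule 𝕂 B')
    (P : ℕ → B' →ₗ[𝕂] B')
    (T : ℕ → B' →ₗ[𝕂] B)
    (E M : ℕ → ℕ → B →ₗ[𝕂] B)
    (hN0 : N 0 = ⊤) (hRc0 : Rc 0 = ⊤)
    (hSb1 : Sb 1 = L 0)
    (hSbrec : ∀ k, 1 ≤ k → Sb (k + 1) = ∑ i ∈ Finset.Icc 1 k, (L i).comp (M i k))
    (hSdef : ∀ k, S (k + 1) = Sb (k + 1) - ∑ i ∈ Finset.Icc 1 k, (P i).comp (Sb (k + 1)))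
    (hNdef : ∀ k, N (k + 1) = LinearMap.ker (S (k + 1)) ⊓ N k)
    (hRdef : ∀ k, R (k + 1) = Submodule.map (S (k + 1)) (N k))
    (hNcompl : ∀ k, Disjoint (Nc (k + 1)) (N (k + 1)) ∧ Nc (k + 1) ⊔ N (k + 1) = N k)
    (hRcompl : ∀ k, Disjoint (R (k + 1)) (Rc (k + 1)) ∧ R (k + 1) ⊔ Rc (k + 1) = Rc k)
    (hPrange : ∀ i, 1 ≤ i → LinearMap.range (P i) ≤ R i)
    (hPid : ∀ i, 1 ≤ i → ∀ y ∈ R i, P i y = y)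
    (hPzeroRc : ∀ i, 1 ≤ i → ∀ y ∈ Rc i, P i y = 0)
    (hPzeroR : ∀ i j, 1 ≤ j → j < i → ∀ y ∈ R j, P i y = 0)
    (hTrange : ∀ i, 1 ≤ i → ∀ y, T i y ∈ Nc i)
    (hST : ∀ i, 1 ≤ i → ∀ y, S i (T i y) = P i y)
    (hEdiag : ∀ k, E (k + 1) (k + 1) = LinearMap.id)
    (hErec : ∀ k i, 1 ≤ i → i ≤ k →
      E i (k + 1) = -((T i).comp (∑ v ∈ Finset.Icc (i + 1) (k + 1), (Sb v).comp (E v (k + 1)))))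
    (hM11 : M 1 1 = LinearMap.id)
    (hM1 : ∀ k, 1 ≤ k → M 1 (k + 1) = E 1 (k + 1))
    (hMrec : ∀ k a, 2 ≤ a → a ≤ k + 1 →
      M a (k + 1) = ∑ b ∈ Finset.Icc (a - 1) k, (M (a - 1) b).comp (E (b + 1) (k + 1)))
    (rank : B → ℕ∞)
    (hrank : ∀ b0 : B, rank b0 = sSup {x : ℕ∞ | ∃ m : ℕ, 1 ≤ m ∧
      (∃ b : ℕ → B, b 0 = b0 ∧
        ∀ l, l + 1 ≤ m → ∑ i ∈ Finset.range (l + 1), L i (b (l - i)) = 0) ∧ x = (m : ℕ∞)})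
    (k : ℕ)
    (hstab : (∀ b0 : B, rank b0 ≤ (k : ℕ∞) ∨ rank b0 = ⊤) ∧ ∃ b0 : B, rank b0 = (k : ℕ∞))
    (φ : ℕ → B →ₗ[𝕂] B)
    (hφ0 : φ 0 = LinearMap.id)
    (hφ : ∀ i, 1 ≤ i → φ i = M (k + 1) (k + 1 + i))
    :
    (∀ l : ℕ, ∑ i ∈ Finset.range (l + 1), (L i).comp (φ (l - i)) = S (l + 1)) ∧
    (∀ i, 1 ≤ i → i ≤ k + 1 →
      Submodule.map (S i) (⨆ j ∈ Finset.Icc 1 (i - 1), Nc j) ≤ Rc (i - 1) ∧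
      Submodule.map (S i) (Nc i) = R i ∧
      ∀ x ∈ N i, S i x = 0) ∧
    (∀ l, 2 ≤ l → LinearMap.range (S (k + l)) ≤ Rc (k + 1) ∧
      ∀ x ∈ N (k + 1), S (k + l) x = 0) ∧
    (∀ i, 1 ≤ i → ∀ x ∈ N (k + 1), S i x = 0) := by
  have h : IsTriangularRecursion L Sb S N Nc R Rc P T E M :=
    { Rc_zero := hRc0, R_sup_Rc := fun k => (hRcompl k).2, range_le := hPrange,
      apply_of_mem := hPid, apply_of_mem_Rc := hPzeroRc, apply_of_mem_of_lt := hPzeroR,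
      N_zero := hN0, Sb_one := hSb1, Sb_succ := hSbrec, S_succ := hSdef, N_succ := hNdef,
      R_succ := hRdef, Nc_succ := hNcompl, T_mem := hTrange, S_T := hST, E_diag := hEdiag,
      E_succ := hErec, M_one_one := hM11, M_one_succ := hM1, M_succ := hMrec }
  have hrank' : ∀ b₀, rank b₀ = jordanRank L b₀ := hrank
  have hN : ∀ m, k + 1 ≤ m → N m = N (k + 1) :=
    fun m hm => h.N_eq_of_jordanRank (fun b₀ => hrank' b₀ ▸ hstab.1 b₀) hm
  have hφM : ∀ j, φ j = M (k + 1) (k + 1 + j) := by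
    rintro (_ | j)
    · rw [hφ0, add_zero, h.M_diag le_add_self]
    · exact hφ _ le_add_self
  have hkill : ∀ i, 1 ≤ i → ∀ x ∈ N (k + 1), S i x = 0 :=
    fun i hi x hx => h.S_apply_eq_zero_of_stable hN hi hx
  refine ⟨fun l => by simpa only [hφM] using h.sum_L_comp_M_of_stable hN l, fun i hi _ => ?_,
    fun l hl => ⟨?_, hkill _ (by omega)⟩, hkill⟩
  · obtain ⟨u, rfl⟩ := Nat.exists_eq_add_of_le' hi
    rw [Nat.add_sub_cancel]
    exact ⟨LinearMap.map_le_range.trans (h.range_S_succ_le u), h.map_S_Nc u,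
      fun x hx => h.S_apply_eq_zero_of_mem_N hi le_rfl hx⟩
  · obtain ⟨u, hu⟩ : ∃ u, k + l = u + 1 := ⟨k + l - 1, by omega⟩
    rw [hu]
    exact (h.range_S_succ_le u).trans (h.Rc_antitone (by omega))

theorem stmt_9
    {𝕂 : Type*} [RCLike 𝕂]
    {B B' : Type*} [AddCommGroup B] [Module 𝕂 B]
    [AddCommGroup B'] [Module 𝕂 B']
    (L : ℕ → B →ₗ[𝕂] B')
    (Sb S : ℕ → B →ₗ[𝕂] B')
    (N Nc : ℕ → Submodule 𝕂 B)
    (R Rc : ℕ → Submodule 𝕂 B')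
    (P : ℕ → B' →ₗ[𝕂] B')
    (T : ℕ → B' →ₗ[𝕂] B)
    (E M : ℕ → ℕ → B →ₗ[𝕂] B)
    (hL : ∃ i, L i ≠ 0)
    (hN0 : N 0 = ⊤) (hRc0 : Rc 0 = ⊤)
    (hSb1 : Sb 1 = L 0)
    (hSbrec : ∀ k, 1 ≤ k → Sb (k + 1) = ∑ i ∈ Finset.Icc 1 k, (L i).comp (M i k))
    (hSdef : ∀ k, S (k + 1) = Sb (k + 1) - ∑ i ∈ Finset.Icc 1 k, (P i).comp (Sb (k + 1)))
    (hNdef : ∀ k, N (k + 1) = LinearMap.ker (S (k + 1)) ⊓ N k)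
    (hRdef : ∀ k, R (k + 1) = Submodule.map (S (k + 1)) (N k))
    (hNcompl : ∀ k, Disjoint (Nc (k + 1)) (N (k + 1)) ∧ Nc (k + 1) ⊔ N (k + 1) = N k)
    (hRcompl : ∀ k, Disjoint (R (k + 1)) (Rc (k + 1)) ∧ R (k + 1) ⊔ Rc (k + 1) = Rc k)
    (hPrange : ∀ i, 1 ≤ i → LinearMap.range (P i) ≤ R i)
    (hPid : ∀ i, 1 ≤ i → ∀ y ∈ R i, P i y = y)
    (hPzeroRc : ∀ i, 1 ≤ i → ∀ y ∈ Rc i, P i y = 0)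
    (hPzeroR : ∀ i j, 1 ≤ j → j < i → ∀ y ∈ R j, P i y = 0)
    (hTrange : ∀ i, 1 ≤ i → ∀ y, T i y ∈ Nc i)
    (hTS : ∀ i, 1 ≤ i → ∀ x ∈ Nc i, T i (S i x) = x)
    (hST : ∀ i, 1 ≤ i → ∀ y, S i (T i y) = P i y)
    (hE11 : E 1 1 = LinearMap.id)
    (hEdiag : ∀ k, E (k + 1) (k + 1) = LinearMap.id)
    (hErec : ∀ k i, 1 ≤ i → i ≤ k →
      E i (k + 1) = -((T i).comp (∑ v ∈ Finset.Icc (i + 1) (k + 1), (Sb v).comp (E v (k + 1)))))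
    (hM11 : M 1 1 = LinearMap.id)
    (hM1 : ∀ k, 1 ≤ k → M 1 (k + 1) = E 1 (k + 1))
    (hMrec : ∀ k a, 2 ≤ a → a ≤ k + 1 →
      M a (k + 1) = ∑ b ∈ Finset.Icc (a - 1) k, (M (a - 1) b).comp (E (b + 1) (k + 1)))
    (rank : B → ℕ∞)
    (hrank : ∀ b0 : B, rank b0 = sSup {x : ℕ∞ | ∃ m : ℕ, 1 ≤ m ∧
      (∃ b : ℕ → B, b 0 = b0 ∧
        ∀ l, l + 1 ≤ m → ∑ i ∈ Finset.range (l + 1), L i (b (l - i)) = 0) ∧ x = (m : ℕ∞)})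
    (k : ℕ)
    (hstab : (∀ b0 : B, rank b0 ≤ (k : ℕ∞) ∨ rank b0 = ⊤) ∧ ∃ b0 : B, rank b0 = (k : ℕ∞))
    (φ : ℕ → B →ₗ[𝕂] B)
    (hφ0 : φ 0 = LinearMap.id)
    (hφ : ∀ i, 1 ≤ i → φ i = M (k + 1) (k + 1 + i))
    :
    (∀ l : ℕ, ∑ i ∈ Finset.range (l + 1), (L i).comp (φ (l - i)) = S (l + 1)) ∧
    (∀ i, 1 ≤ i → i ≤ k + 1 →
      Submodule.map (S i) (⨆ j ∈ Finset.Icc 1 (i - 1), Nc j) ≤ Rc (i - 1) ∧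
      Submodule.map (S i) (Nc i) = R i ∧
      ∀ x ∈ N i, S i x = 0) ∧
    (∀ l, 2 ≤ l → LinearMap.range (S (k + l)) ≤ Rc (k + 1) ∧
      ∀ x ∈ N (k + 1), S (k + l) x = 0) ∧
    (∀ i, 1 ≤ i → ∀ x ∈ N (k + 1), S i x = 0) :=
  stmt_9_general L Sb S N Nc R Rc P T E M hN0 hRc0 hSb1 hSbrec hSdef hNdef hRdef hNcompl hRcompl
    hPrange hPid hPzeroRc hPzeroR hTrange hST hEdiag hErec hM11 hM1 hMrec rank hrank k hstab φ hφ0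
    hφ
end

section
/- Assume L(ε) stabilizes at k ≥ 0. Define H_1 := e_{1,k+2} and H_a := Σ_{b=a−1}^{k} M_{a−1,b}∘e_{b+1,k+2} for a = 2,…,k+1 (linear maps B̄ → B). Then for every l ≥ k+1 and every 1 ≤ a ≤ k+1: M_{a,k+1+l} = Σ_{b=1}^{a} H_{a−b+1}∘S̄_{k+2+l−b}. -/
namespace Stmt11Aux

theorem sum_Icc_one_eq {β : Type*} [AddCommMonoid β] (f : ℕ → β) (n : ℕ) :
    ∑ b ∈ Finset.Icc 1 n, f b = ∑ i ∈ Finset.range n, f (i + 1) := by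
  rw [← Finset.Ico_add_one_right_eq_Icc, Finset.sum_Ico_eq_sum_range]
  rw [show n + 1 - 1 = n from rfl]
  exact Finset.sum_congr rfl fun i _ => by rw [Nat.add_comm]

theorem sum_Icc_shift {β : Type*} [AddCommMonoid β] (f : ℕ → β) (a n : ℕ) :
    ∑ b ∈ Finset.Icc (a + 1) (n + 1), f b = ∑ b ∈ Finset.Icc a n, f (b + 1) := by
  rw [← Finset.Ico_add_one_right_eq_Icc, ← Finset.Ico_add_one_right_eq_Icc, Finset.sum_Ico_eq_sum_range,
    Finset.sum_Ico_eq_sum_range]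
  rw [show n + 1 + 1 - (a + 1) = n + 1 - a from by omega]
  exact Finset.sum_congr rfl fun i _ => by rw [show a + 1 + i = a + i + 1 from by omega]

structure Ctx (𝕂 : Type*) [RCLike 𝕂] (B B' : Type*) [AddCommGroup B] [Module 𝕂 B]
    [AddCommGroup B'] [Module 𝕂 B'] where
  L : ℕ → B →ₗ[𝕂] B'
  Sb : ℕ → B →ₗ[𝕂] B'
  S : ℕ → B →ₗ[𝕂] B'
  N : ℕ → Submodule 𝕂 B
  Nc : ℕ → Submodule 𝕂 B
  R : ℕ → Submodule 𝕂 B'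
  Rc : ℕ → Submodule 𝕂 B'
  P : ℕ → B' →ₗ[𝕂] B'
  T : ℕ → B' →ₗ[𝕂] B
  E : ℕ → ℕ → B →ₗ[𝕂] B
  M : ℕ → ℕ → B →ₗ[𝕂] B
  hN0 : N 0 = ⊤
  hSb1 : Sb 1 = L 0
  hSbrec : ∀ n, 1 ≤ n → Sb (n + 1) = ∑ i ∈ Finset.Icc 1 n, (L i).comp (M i n)
  hSdef : ∀ n, S (n + 1) = Sb (n + 1) - ∑ i ∈ Finset.Icc 1 n, (P i).comp (Sb (n + 1))
  hNdef : ∀ n, N (n + 1) = LinearMap.ker (S (n + 1)) ⊓ N n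
  hRdef : ∀ n, R (n + 1) = Submodule.map (S (n + 1)) (N n)
  hNcdisj : ∀ n, Disjoint (Nc (n + 1)) (N (n + 1))
  hNcsup : ∀ n, Nc (n + 1) ⊔ N (n + 1) = N n
  hRcsup : ∀ n, R (n + 1) ⊔ Rc (n + 1) = Rc n
  hPrange : ∀ i, 1 ≤ i → LinearMap.range (P i) ≤ R i
  hPid : ∀ i, 1 ≤ i → ∀ y ∈ R i, P i y = y
  hPzeroRc : ∀ i, 1 ≤ i → ∀ y ∈ Rc i, P i y = 0
  hPzeroR : ∀ i j, 1 ≤ j → j < i → ∀ y ∈ R j, P i y = 0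
  hTrange : ∀ i, 1 ≤ i → ∀ y, T i y ∈ Nc i
  hST : ∀ i, 1 ≤ i → ∀ y, S i (T i y) = P i y
  hEdiag : ∀ n, E (n + 1) (n + 1) = LinearMap.id
  hErec : ∀ n i, 1 ≤ i → i ≤ n →
    E i (n + 1) = -((T i).comp (∑ v ∈ Finset.Icc (i + 1) (n + 1), (Sb v).comp (E v (n + 1))))
  hM11 : M 1 1 = LinearMap.id
  hM1 : ∀ n, 1 ≤ n → M 1 (n + 1) = E 1 (n + 1)
  hMrec : ∀ n a, 2 ≤ a → a ≤ n + 1 →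
    M a (n + 1) = ∑ b ∈ Finset.Icc (a - 1) n, (M (a - 1) b).comp (E (b + 1) (n + 1))

namespace Ctx

variable {𝕂 : Type*} [RCLike 𝕂] {B B' : Type*} [AddCommGroup B] [Module 𝕂 B]
    [AddCommGroup B'] [Module 𝕂 B'] (c : Ctx 𝕂 B B')

theorem S1 : c.S 1 = c.L 0 := by
  have h := c.hSdef 0
  simpa [c.hSb1] using h

theorem N_succ_le (n : ℕ) : c.N (n + 1) ≤ c.N n := by
  rw [c.hNdef]; exact inf_le_right

theorem N_mono : ∀ {i j : ℕ}, i ≤ j → c.N j ≤ c.N i := by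
  intro i j h
  induction h with
  | refl => exact le_rfl
  | step h ih => exact le_trans (c.N_succ_le _) ih

theorem S_zero_on_N (n : ℕ) (x : B) (hx : x ∈ c.N (n + 1)) : c.S (n + 1) x = 0 := by
  rw [c.hNdef] at hx
  exact LinearMap.mem_ker.mp hx.1

theorem M_diag : ∀ n, 1 ≤ n → c.M n n = LinearMap.id := by
  intro n
  induction n with
  | zero => omega
  | succ n ih =>
    intro _
    rcases Nat.eq_zero_or_pos n with rfl | hn
    · exact c.hM11
    · have h := c.hMrec n (n + 1) (by omega) (by omega)
      simp only [Nat.add_sub_cancel] at h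
      rw [h, Finset.Icc_self, Finset.sum_singleton, c.hEdiag, LinearMap.comp_id, ih hn]

theorem R_le_Rc (n : ℕ) : c.R (n + 1) ≤ c.Rc n :=
  le_sup_left.trans_eq (c.hRcsup n)

theorem Rc_mono : ∀ {i j : ℕ}, i ≤ j → c.Rc j ≤ c.Rc i := by
  intro i j h
  induction h with
  | refl => exact le_rfl
  | step h ih => exact le_trans (le_sup_right.trans_eq (c.hRcsup _)) ih

theorem P_zero_R_high (i j : ℕ) (h1 : 1 ≤ i) (hij : i < j) (y : B') (hy : y ∈ c.R j) :
    c.P i y = 0 := by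
  obtain ⟨j', rfl⟩ : ∃ j', j = j' + 1 := ⟨j - 1, by omega⟩
  exact c.hPzeroRc i h1 y (c.Rc_mono (by omega) (c.R_le_Rc j' hy))

def InR (n : ℕ) (y : B') : Prop :=
  ∃ r : ℕ → B', (∀ j, r j ∈ c.R j) ∧ y = ∑ j ∈ Finset.Icc 1 n, r j

theorem InR_zero (n : ℕ) : c.InR n 0 :=
  ⟨0, fun j => Submodule.zero_mem _, by simp⟩

theorem InR_add {n : ℕ} {y z : B'} (hy : c.InR n y) (hz : c.InR n z) : c.InR n (y + z) := by
  obtain ⟨r, hr, rfl⟩ := hy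
  obtain ⟨s, hs, rfl⟩ := hz
  exact ⟨r + s, fun j => Submodule.add_mem _ (hr j) (hs j), by
    simp [Finset.sum_add_distrib]⟩

theorem InR_neg {n : ℕ} {y : B'} (hy : c.InR n y) : c.InR n (-y) := by
  obtain ⟨r, hr, rfl⟩ := hy
  exact ⟨-r, fun j => Submodule.neg_mem _ (hr j), by simp⟩

theorem InR_sub {n : ℕ} {y z : B'} (hy : c.InR n y) (hz : c.InR n z) : c.InR n (y - z) := by
  rw [sub_eq_add_neg]; exact c.InR_add hy (c.InR_neg hz)

theorem InR_mono {n n' : ℕ} (h : n ≤ n') {y : B'} (hy : c.InR n y) : c.InR n' y := by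
  obtain ⟨r, hr, rfl⟩ := hy
  refine ⟨fun j => if j ≤ n then r j else 0, fun j => by
    by_cases hj : j ≤ n <;> simp [hj, hr j, Submodule.zero_mem], ?_⟩
  calc ∑ j ∈ Finset.Icc 1 n, r j
      = ∑ j ∈ Finset.Icc 1 n, (if j ≤ n then r j else 0) := by
        refine Finset.sum_congr rfl fun j hj => ?_
        simp only [Finset.mem_Icc] at hj
        rw [if_pos hj.2]
    _ = ∑ j ∈ Finset.Icc 1 n', (if j ≤ n then r j else 0) := by
        refine Finset.sum_subset (Finset.Icc_subset_Icc_right h) fun j hj hnj => ?_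
        rw [Finset.mem_Icc] at hj hnj
        push_neg at hnj
        rw [if_neg (by omega)]

theorem InR_single {n j : ℕ} (hj : j ∈ Finset.Icc 1 n) {y : B'} (hy : y ∈ c.R j) :
    c.InR n y := by
  refine ⟨fun i => if i = j then y else 0, fun i => by
    by_cases hi : i = j
    · subst hi; simp [hy]
    · simp [hi, Submodule.zero_mem], ?_⟩
  symm
  rw [Finset.sum_ite_eq' (Finset.Icc 1 n) j fun _ => y, if_pos hj]

theorem InR_sum {n : ℕ} (f : ℕ → B') (hf : ∀ j ∈ Finset.Icc 1 n, f j ∈ c.R j) :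
    c.InR n (∑ j ∈ Finset.Icc 1 n, f j) := by
  refine ⟨fun j => if j ∈ Finset.Icc 1 n then f j else 0, fun j => by
    by_cases hj : j ∈ Finset.Icc 1 n
    · simp [hj, hf j hj]
    · simp [hj, Submodule.zero_mem], ?_⟩
  exact Finset.sum_congr rfl fun j hj => by simp [hj]

theorem InR_kill {n : ℕ} {y : B'} (h : c.InR n y) :
    ∑ i ∈ Finset.Icc 1 n, c.P i y = y := by
  obtain ⟨r, hr, rfl⟩ := h
  have key : ∀ i ∈ Finset.Icc 1 n, c.P i (∑ j ∈ Finset.Icc 1 n, r j) = r i := by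
    intro i hi
    simp only [Finset.mem_Icc] at hi
    rw [map_sum]
    rw [Finset.sum_eq_single_of_mem i (by simp [Finset.mem_Icc]; omega)]
    · exact c.hPid i hi.1 (r i) (hr i)
    · intro j hj hne
      simp only [Finset.mem_Icc] at hj
      rcases lt_or_gt_of_ne hne with hlt | hgt
      · exact c.hPzeroR i j hj.1 hlt (r j) (hr j)
      · exact c.P_zero_R_high i j hi.1 hgt (r j) (hr j)
  exact Finset.sum_congr rfl key

theorem Sb_decomp (n : ℕ) (x : B) :
    c.Sb (n + 1) x = c.S (n + 1) x + ∑ i ∈ Finset.Icc 1 n, c.P i (c.Sb (n + 1) x) := by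
  have h := LinearMap.congr_fun (c.hSdef n) x
  simp only [LinearMap.sub_apply, LinearMap.sum_apply, LinearMap.comp_apply] at h
  rw [h]; abel

theorem Sb_mem_InR {n : ℕ} {x : B} (hx : x ∈ c.N n) : c.InR (n + 1) (c.Sb (n + 1) x) := by
  rw [c.Sb_decomp n x]
  apply c.InR_add
  · exact c.InR_single (j := n + 1) (by simp [Finset.mem_Icc])
      (by rw [c.hRdef]; exact ⟨x, hx, rfl⟩)
  · exact c.InR_mono (Nat.le_succ n) (c.InR_sum _ fun i hi => by
      simp only [Finset.mem_Icc] at hi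
      exact c.hPrange i hi.1 ⟨_, rfl⟩)

theorem S_zero_of_InR {n : ℕ} {x : B} (h : c.InR n (c.Sb (n + 1) x)) :
    c.S (n + 1) x = 0 := by
  have hd := LinearMap.congr_fun (c.hSdef n) x
  simp only [LinearMap.sub_apply, LinearMap.sum_apply, LinearMap.comp_apply] at hd
  rw [hd, c.InR_kill h, sub_self]

variable {𝕂 : Type*} [RCLike 𝕂] {B B' : Type*} [AddCommGroup B] [Module 𝕂 B]
    [AddCommGroup B'] [Module 𝕂 B'] (c : Ctx 𝕂 B B')

theorem hErec_apply (n i : ℕ) (h1 : 1 ≤ i) (h2 : i ≤ n) (x : B) :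
    c.E i (n + 1) x = -(c.T i (∑ v ∈ Finset.Icc (i + 1) (n + 1), c.Sb v (c.E v (n + 1) x))) := by
  have h := LinearMap.congr_fun (c.hErec n i h1 h2) x
  simpa [LinearMap.sum_apply, map_sum] using h

theorem L5 (n : ℕ) (x : B) :
    c.L 0 (c.M 1 (n + 1) x) + ∑ b ∈ Finset.Icc 1 n, c.Sb (b + 1) (c.E (b + 1) (n + 1) x)
      = c.S (n + 1) x := by
  rcases Nat.eq_zero_or_pos n with rfl | hn
  · have he : Finset.Icc 1 0 = (∅ : Finset ℕ) := Finset.Icc_eq_empty (by omega)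
    rw [he, Finset.sum_empty, add_zero, c.hM11, ← c.S1]
    simp
  · set W : ℕ → B' := fun v => ∑ u ∈ Finset.Icc v (n + 1), c.Sb u (c.E u (n + 1) x) with hW
    have keyE : ∀ i, 1 ≤ i → i ≤ n → c.E i (n + 1) x = -(c.T i (W (i + 1))) := by
      intro i hi1 hi2
      rw [c.hErec_apply n i hi1 hi2]
    have aux : ∀ t i, 1 ≤ i → i + t = n →
        W (i + 1) - ∑ j ∈ Finset.Icc 1 i, c.P j (W (i + 1)) = c.S (n + 1) x := by
      intro t
      induction t with
      | zero =>
        intro i h1 h2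
        have hi : i = n := by omega
        subst hi
        have hWn : W (i + 1) = c.Sb (i + 1) x := by
          rw [hW]
          simp only [Finset.Icc_self, Finset.sum_singleton]
          rw [c.hEdiag]
          simp
        rw [hWn]
        have h := LinearMap.congr_fun (c.hSdef i) x
        simp only [LinearMap.sub_apply, LinearMap.sum_apply, LinearMap.comp_apply] at h
        rw [← h]
      | succ t ih =>
        intro i h1 h2
        have hsplit : W (i + 1) = c.Sb (i + 1) (c.E (i + 1) (n + 1) x) + W (i + 2) := by
          rw [hW]
          simp only []
          rw [← Finset.Ico_add_one_right_eq_Icc, Finset.sum_eq_sum_Ico_succ_bot (by omega : i + 1 < n + 1 + 1),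
            Finset.Ico_add_one_right_eq_Icc]
        have hE : c.E (i + 1) (n + 1) x = -(c.T (i + 1) (W (i + 2))) :=
          keyE (i + 1) (by omega) (by omega)
        have hSb' : c.Sb (i + 1) (c.T (i + 1) (W (i + 2)))
            - ∑ j ∈ Finset.Icc 1 i, c.P j (c.Sb (i + 1) (c.T (i + 1) (W (i + 2))))
            = c.P (i + 1) (W (i + 2)) := by
          have hd := LinearMap.congr_fun (c.hSdef i) (c.T (i + 1) (W (i + 2)))
          simp only [LinearMap.sub_apply, LinearMap.sum_apply, LinearMap.comp_apply] at hd
          rw [← hd, c.hST (i + 1) (by omega)]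
        have ihh := ih (i + 1) (by omega) (by omega)
        rw [hsplit, hE, map_neg]
        have hPsum : ∀ j, c.P j (-(c.Sb (i + 1) (c.T (i + 1) (W (i + 2)))) + W (i + 2))
            = -(c.P j (c.Sb (i + 1) (c.T (i + 1) (W (i + 2))))) + c.P j (W (i + 2)) := by
          intro j; rw [map_add, map_neg]
        rw [Finset.sum_congr rfl fun j _ => hPsum j, Finset.sum_add_distrib,
          Finset.sum_neg_distrib]
        rw [Finset.sum_Icc_succ_top (by omega : 1 ≤ i + 1) (fun j => c.P j (W (i + 2)))] at ihh
        -- goal: (-(A) + w) - (-(U1) + U2) = S x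
        -- ihh : w - (U2 + P (i+1) w) = S x ; hSb' : A - U1 = P (i+1) w
        have hfin : ∀ (A w Sx P1w U1 U2 : B'), A - U1 = P1w → w - (U2 + P1w) = Sx →
            (-A + w) - (-U1 + U2) = Sx := by
          intro A w Sx P1w U1 U2 h1' h2'
          rw [← h2', ← h1']
          abel
        exact hfin _ _ _ _ _ _ hSb' ihh
    have hIcc : ∑ b ∈ Finset.Icc 1 n, c.Sb (b + 1) (c.E (b + 1) (n + 1) x) = W 2 := by
      rw [hW]
      exact (sum_Icc_shift (fun u => c.Sb u (c.E u (n + 1) x)) 1 n).symm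
    have hM : c.L 0 (c.M 1 (n + 1) x) = -(c.P 1 (W 2)) := by
      obtain ⟨n', rfl⟩ : ∃ n', n = n' + 1 := ⟨n - 1, by omega⟩
      rw [c.hM1 (n' + 1) (by omega)]
      rw [keyE 1 le_rfl (by omega)]
      rw [show (1 : ℕ) + 1 = 2 from rfl]
      rw [map_neg, ← c.hSb1]
      rw [show c.Sb 1 = c.S 1 from (c.S1.trans c.hSb1.symm).symm]
      rw [c.hST 1 le_rfl]
    have h1 := aux (n - 1) 1 le_rfl (by omega)
    rw [Finset.Icc_self, Finset.sum_singleton, show (1 : ℕ) + 1 = 2 from rfl] at h1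
    rw [hIcc, hM, ← h1]
    abel

theorem Estar {b m : ℕ} {x : B} (h : b + 1 ≤ m) (hx : x ∈ c.N m) :
    c.E (b + 1) m x ∈ c.N b := by
  rcases eq_or_lt_of_le h with heq | hlt
  · subst heq
    rw [c.hEdiag b]
    exact c.N_succ_le b hx
  · obtain ⟨n, rfl⟩ : ∃ n, m = n + 1 := ⟨m - 1, by omega⟩
    rw [c.hErec n (b + 1) (by omega) (by omega)]
    simp only [LinearMap.neg_apply, LinearMap.comp_apply]
    apply Submodule.neg_mem
    have hmem := c.hTrange (b + 1) (by omega)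
      ((∑ v ∈ Finset.Icc (b + 1 + 1) (n + 1), (c.Sb v).comp (c.E v (n + 1))) x)
    have hle : c.Nc (b + 1) ≤ c.N b := le_sup_left.trans_eq (c.hNcsup b)
    exact hle hmem

theorem claim1 (a : ℕ) : 1 ≤ a → ∀ m (x : B), a ≤ m → x ∈ c.N m →
    ∑ i ∈ Finset.range (m - a + 1), c.L i (c.M (a + i) m x) = 0 := by
  induction a with
  | zero => omega
  | succ a ih =>
    intro _ m x ham hx
    obtain ⟨n, rfl⟩ : ∃ n, m = n + 1 := ⟨m - 1, by omega⟩
    rcases Nat.eq_zero_or_pos a with rfl | ha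
    · -- base case a + 1 = 1
      rw [show n + 1 - 1 + 1 = n + 1 from by omega]
      rw [Finset.sum_range_succ']
      -- ∑ i ∈ range n, L (i+1) (M (1 + (i+1)) (n+1) x) + L 0 (M (1+0) (n+1) x)
      have hconv : ∑ i ∈ Finset.range n, c.L (i + 1) (c.M (1 + (i + 1)) (n + 1) x)
          = ∑ b ∈ Finset.Icc 1 n, c.L b (c.M (1 + b) (n + 1) x) :=
        (sum_Icc_one_eq (fun b => c.L b (c.M (1 + b) (n + 1) x)) n).symm
      rw [hconv]
      have hMr : ∀ b ∈ Finset.Icc 1 n, c.L b (c.M (1 + b) (n + 1) x)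
          = ∑ u ∈ Finset.Icc b n, c.L b (c.M b u (c.E (u + 1) (n + 1) x)) := by
        intro b hb
        simp only [Finset.mem_Icc] at hb
        have h := c.hMrec n (1 + b) (by omega) (by omega)
        rw [show 1 + b - 1 = b from by omega] at h
        rw [h]
        simp [LinearMap.sum_apply, map_sum]
      rw [Finset.sum_congr rfl hMr]
      have hswap : ∑ b ∈ Finset.Icc 1 n, ∑ u ∈ Finset.Icc b n,
            c.L b (c.M b u (c.E (u + 1) (n + 1) x))
          = ∑ u ∈ Finset.Icc 1 n, ∑ b ∈ Finset.Icc 1 u,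
            c.L b (c.M b u (c.E (u + 1) (n + 1) x)) := by
        apply Finset.sum_comm'
        intro b u
        simp only [Finset.mem_Icc]
        omega
      rw [hswap]
      have hSb : ∀ u ∈ Finset.Icc 1 n, ∑ b ∈ Finset.Icc 1 u,
            c.L b (c.M b u (c.E (u + 1) (n + 1) x))
          = c.Sb (u + 1) (c.E (u + 1) (n + 1) x) := by
        intro u hu
        simp only [Finset.mem_Icc] at hu
        have h := LinearMap.congr_fun (c.hSbrec u hu.1) (c.E (u + 1) (n + 1) x)
        simp only [LinearMap.sum_apply, LinearMap.comp_apply] at h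
        rw [h]
      rw [Finset.sum_congr rfl hSb]
      rw [add_comm, show (1 : ℕ) + 0 = 1 from rfl]
      rw [c.L5 n x]
      exact c.S_zero_on_N n x hx
    · -- inductive step, a ≥ 1
      have hMr : ∀ i ∈ Finset.range (n + 1 - (a + 1) + 1),
          c.L i (c.M (a + 1 + i) (n + 1) x)
          = ∑ b ∈ Finset.Icc (a + i) n, c.L i (c.M (a + i) b (c.E (b + 1) (n + 1) x)) := by
        intro i hi
        simp only [Finset.mem_range] at hi
        have h := c.hMrec n (a + 1 + i) (by omega) (by omega)
        rw [show a + 1 + i - 1 = a + i from by omega] at h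
        rw [h]
        simp [LinearMap.sum_apply, map_sum]
      rw [Finset.sum_congr rfl hMr]
      have hswap : ∑ i ∈ Finset.range (n + 1 - (a + 1) + 1), ∑ b ∈ Finset.Icc (a + i) n,
            c.L i (c.M (a + i) b (c.E (b + 1) (n + 1) x))
          = ∑ b ∈ Finset.Icc a n, ∑ i ∈ Finset.range (b - a + 1),
            c.L i (c.M (a + i) b (c.E (b + 1) (n + 1) x)) := by
        apply Finset.sum_comm'
        intro i b
        simp only [Finset.mem_range, Finset.mem_Icc]
        omega
      rw [hswap]
      apply Finset.sum_eq_zero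
      intro b hb
      simp only [Finset.mem_Icc] at hb
      exact ih ha b (c.E (b + 1) (n + 1) x) hb.1 (c.Estar (by omega) hx)


variable {𝕂 : Type*} [RCLike 𝕂] {B B' : Type*} [AddCommGroup B] [Module 𝕂 B]
    [AddCommGroup B'] [Module 𝕂 B'] (c : Ctx 𝕂 B B')

def IsChain (m : ℕ) (b : ℕ → B) : Prop :=
  ∀ l, l + 1 ≤ m → ∑ i ∈ Finset.range (l + 1), c.L i (b (l - i)) = 0

theorem canonical_chain {m : ℕ} {x : B} (h1 : 1 ≤ m) (hx : x ∈ c.N m) :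
    c.IsChain m (fun j => c.M (m - j) m x) := by
  intro l hl
  have hcongr : ∀ i ∈ Finset.range (l + 1),
      c.L i (c.M (m - (l - i)) m x) = c.L i (c.M ((m - l) + i) m x) := by
    intro i hi
    simp only [Finset.mem_range] at hi
    rw [show m - (l - i) = (m - l) + i from by omega]
  rw [Finset.sum_congr rfl hcongr]
  have h := c.claim1 (m - l) (by omega) m x (by omega) hx
  rwa [show m - (m - l) + 1 = l + 1 from by omega] at h

theorem canonical_chain_root {m : ℕ} {x : B} (h1 : 1 ≤ m) (hx : x ∈ c.N m) :
    c.M (m - 0) m x = x := by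
  rw [Nat.sub_zero, c.M_diag m h1]
  rfl

theorem c2y : ∀ n : ℕ, (∀ b : ℕ → B, c.IsChain n b → b 0 ∈ c.N n) ∧
    (∀ b : ℕ → B, c.IsChain n b → 1 ≤ n →
      c.InR n (c.Sb (n + 1) (b 0) - ∑ i ∈ Finset.Icc 1 n, c.L i (b (n - i)))) := by
  intro n
  induction n using Nat.strong_induction_on with
  | _ n ih =>
  rcases n with _ | n'
  · refine ⟨fun b _ => by rw [c.hN0]; trivial, fun _ _ h => by omega⟩
  · have hC2 : ∀ b : ℕ → B, c.IsChain (n' + 1) b → b 0 ∈ c.N (n' + 1) := by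
      intro b hb
      have hbn : b 0 ∈ c.N n' :=
        (ih n' (by omega)).1 b (fun l hl => hb l (by omega))
      have hker : c.S (n' + 1) (b 0) = 0 := by
        rcases Nat.eq_zero_or_pos n' with rfl | hn'
        · have h0 := hb 0 (by omega)
          have hS1 := LinearMap.congr_fun c.S1 (b 0)
          rw [hS1]
          simpa using h0
        · have hY := (ih n' (by omega)).2 b (fun l hl => hb l (by omega)) hn'
          have hPhi : ∑ i ∈ Finset.Icc 1 n', c.L i (b (n' - i)) = -(c.L 0 (b n')) := by
            have h0 := hb n' (le_refl _)
            rw [Finset.sum_range_succ'] at h0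
            rw [← sum_Icc_one_eq (fun i => c.L i (b (n' - i))) n'] at h0
            simp only [Nat.sub_zero] at h0
            exact eq_neg_of_add_eq_zero_left h0
          have hL0R : c.L 0 (b n') ∈ c.R 1 := by
            rw [show (1 : ℕ) = 0 + 1 from rfl, c.hRdef 0]
            refine ⟨b n', by rw [c.hN0]; trivial, ?_⟩
            rw [← c.S1]
          have hSbIn : c.InR n' (c.Sb (n' + 1) (b 0)) := by
            have h2 : c.InR n' (∑ i ∈ Finset.Icc 1 n', c.L i (b (n' - i))) := by
              rw [hPhi]
              exact c.InR_neg (c.InR_single (by simp [Finset.mem_Icc]; omega) hL0R)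
            have := c.InR_add hY h2
            simpa using this
          exact c.S_zero_of_InR hSbIn
      rw [c.hNdef]
      exact ⟨LinearMap.mem_ker.mpr hker, hbn⟩
    refine ⟨hC2, ?_⟩
    intro b hb _
    rcases Nat.eq_zero_or_pos n' with rfl | hn'
    · -- n = 1 : Sb 2 (b 0) - L 1 (b 0) = 0
      have hSb2 : c.Sb 2 = c.L 1 := by
        rw [show (2:ℕ) = 1 + 1 from rfl, c.hSbrec 1 le_rfl]
        rw [Finset.Icc_self, Finset.sum_singleton, c.hM11, LinearMap.comp_id]
      have : c.Sb (0 + 1 + 1) (b 0) - ∑ i ∈ Finset.Icc 1 (0 + 1), c.L i (b (0 + 1 - i)) = 0 := by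
        rw [Finset.Icc_self, Finset.sum_singleton]
        rw [show (0:ℕ) + 1 + 1 = 2 from rfl, hSb2]
        simp
      rw [this]
      exact c.InR_zero _
    · -- main case n' ≥ 1
      have hb0 : b 0 ∈ c.N (n' + 1) := hC2 b hb
      set d : ℕ → B := fun j => c.M (n' + 1 - j) (n' + 1) (b 0) - b j with hd
      have hdj : ∀ j, d j = c.M (n' + 1 - j) (n' + 1) (b 0) - b j := fun j => by rw [hd]
      have hdchain : c.IsChain (n' + 1) d := by
        intro l hl
        have h1 := c.canonical_chain (show 1 ≤ n' + 1 by omega) hb0 l hl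
        have h2 := hb l hl
        have : ∀ i ∈ Finset.range (l + 1), c.L i (d (l - i)) =
            c.L i (c.M (n' + 1 - (l - i)) (n' + 1) (b 0)) - c.L i (b (l - i)) := by
          intro i _
          rw [hdj, map_sub]
        rw [Finset.sum_congr rfl this, Finset.sum_sub_distrib, h1, h2, sub_zero]
      have hd0 : d 0 = 0 := by
        rw [hdj 0]
        simp only [Nat.sub_zero]
        rw [c.M_diag (n' + 1) (by omega)]
        simp
      have hd'chain : c.IsChain n' (fun j => d (j + 1)) := by
        intro l hl
        have h := hdchain (l + 1) (by omega)
        rw [Finset.sum_range_succ] at h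
        rw [Nat.sub_self, hd0, map_zero, add_zero] at h
        rw [← h]
        refine Finset.sum_congr rfl fun i hi => ?_
        simp only [Finset.mem_range] at hi
        show c.L i (d (l - i + 1)) = c.L i (d (l + 1 - i))
        rw [show l - i + 1 = l + 1 - i from by omega]
      have hd1 : d 1 ∈ c.N n' := (ih n' (by omega)).1 _ hd'chain
      have hY' := (ih n' (by omega)).2 _ hd'chain hn'
      have hSbd : c.InR (n' + 1) (c.Sb (n' + 1) (d 1)) := c.Sb_mem_InR hd1
      have hPhi' : c.InR (n' + 1) (∑ i ∈ Finset.Icc 1 n', c.L i (d (n' - i + 1))) := by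
        have := c.InR_sub hSbd (c.InR_mono (by omega) hY')
        simpa using this
      have key : c.Sb (n' + 1 + 1) (b 0) - ∑ i ∈ Finset.Icc 1 (n' + 1), c.L i (b (n' + 1 - i))
          = ∑ i ∈ Finset.Icc 1 n', c.L i (d (n' - i + 1)) := by
        have hSbr := LinearMap.congr_fun (c.hSbrec (n' + 1) (by omega)) (b 0)
        simp only [LinearMap.sum_apply, LinearMap.comp_apply] at hSbr
        rw [hSbr, ← Finset.sum_sub_distrib]
        have hcongr1 : ∀ i ∈ Finset.Icc 1 (n' + 1),
            c.L i (c.M i (n' + 1) (b 0)) - c.L i (b (n' + 1 - i))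
            = c.L i (d (n' + 1 - i)) := by
          intro i hi
          simp only [Finset.mem_Icc] at hi
          rw [hdj (n' + 1 - i), show n' + 1 - (n' + 1 - i) = i from by omega, map_sub]
        rw [Finset.sum_congr rfl hcongr1]
        rw [Finset.sum_Icc_succ_top (by omega : 1 ≤ n' + 1)]
        rw [Nat.sub_self, hd0, map_zero, add_zero]
        refine Finset.sum_congr rfl fun i hi => ?_
        simp only [Finset.mem_Icc] at hi
        rw [show n' + 1 - i = n' - i + 1 from by omega]
      rw [key]
      exact hPhi'

theorem Tzero (k : ℕ) (rank : B → ℕ∞)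
    (hrank : ∀ b0 : B, rank b0 = sSup {x : ℕ∞ | ∃ m : ℕ, 1 ≤ m ∧
      (∃ b : ℕ → B, b 0 = b0 ∧
        ∀ l, l + 1 ≤ m → ∑ i ∈ Finset.range (l + 1), c.L i (b (l - i)) = 0) ∧ x = (m : ℕ∞)})
    (hstab1 : ∀ b0 : B, rank b0 ≤ (k : ℕ∞) ∨ rank b0 = ⊤) :
    ∀ v, k + 2 ≤ v → c.T v = 0 := by
  intro v hv
  obtain ⟨w, rfl⟩ : ∃ w, v = w + 1 := ⟨v - 1, by omega⟩
  have hw : k + 1 ≤ w := by omega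
  have hNN : c.N w ≤ c.N (w + 1) := by
    intro x hx
    have hchain := c.canonical_chain (show 1 ≤ w by omega) hx
    have hmem : (w : ℕ∞) ∈ {x' : ℕ∞ | ∃ m : ℕ, 1 ≤ m ∧
        (∃ b : ℕ → B, b 0 = x ∧
          ∀ l, l + 1 ≤ m → ∑ i ∈ Finset.range (l + 1), c.L i (b (l - i)) = 0) ∧
        x' = (m : ℕ∞)} :=
      ⟨w, by omega, ⟨fun j => c.M (w - j) w x, c.canonical_chain_root (by omega) hx, hchain⟩, rfl⟩
    have hge : (w : ℕ∞) ≤ rank x := by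
      rw [hrank x]
      exact le_sSup hmem
    have htop : rank x = ⊤ := by
      rcases hstab1 x with h | h
      · exfalso
        have : (w : ℕ∞) ≤ (k : ℕ∞) := le_trans hge h
        have : w ≤ k := Nat.cast_le.mp this
        omega
      · exact h
    have hlt : (w : ℕ∞) < sSup {x' : ℕ∞ | ∃ m : ℕ, 1 ≤ m ∧
        (∃ b : ℕ → B, b 0 = x ∧
          ∀ l, l + 1 ≤ m → ∑ i ∈ Finset.range (l + 1), c.L i (b (l - i)) = 0) ∧
        x' = (m : ℕ∞)} := by
      rw [← hrank x, htop]
      exact ENat.coe_lt_top w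
    obtain ⟨s, hs, hslt⟩ := lt_sSup_iff.mp hlt
    obtain ⟨m, hm1, ⟨bb, hbb0, hbbchain⟩, rfl⟩ := hs
    have hwm : w + 1 ≤ m := by
      have : w < m := by exact_mod_cast hslt
      omega
    have : bb 0 ∈ c.N (w + 1) :=
      (c.c2y (w + 1)).1 bb (fun l hl => hbbchain l (by omega))
    rwa [hbb0] at this
  have hNc : c.Nc (w + 1) = ⊥ :=
    (c.hNcdisj w).eq_bot_of_le
      (le_trans (le_trans le_sup_left (le_of_eq (c.hNcsup w))) hNN)
  ext y
  simp only [LinearMap.zero_apply]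
  have := c.hTrange (w + 1) (by omega) y
  rw [hNc] at this
  simpa using this


theorem eId (e : ℕ → ℕ → B' →ₗ[𝕂] B)
    (heBase : ∀ m, 2 ≤ m → e (m - 1) m = -(c.T (m - 1)))
    (heStep : ∀ m i, 1 ≤ i → i + 2 ≤ m →
      e i m = (e i (m - 1)).comp
        ((LinearMap.id : B' →ₗ[𝕂] B') - (c.Sb (m - 1)).comp (c.T (m - 1)))) :
    ∀ m i, 1 ≤ i → i + 1 ≤ m →
      e i m = -((c.T i).comp ((LinearMap.id : B' →ₗ[𝕂] B')
        + ∑ v ∈ Finset.Icc (i + 1) (m - 1), (c.Sb v).comp (e v m))) := by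
  intro m
  induction m with
  | zero => intro i h1 h2; omega
  | succ m ihm =>
    intro i h1 h2
    rcases eq_or_lt_of_le h2 with heq | hlt
    · have h3 : i = m := by omega
      subst h3
      have hbase := heBase (i + 1) (by omega)
      rw [show i + 1 - 1 = i from by omega] at hbase
      rw [hbase, show i + 1 - 1 = i from by omega,
        Finset.Icc_eq_empty (by omega : ¬ i + 1 ≤ i), Finset.sum_empty, add_zero,
        LinearMap.comp_id]
    · obtain ⟨m', rfl⟩ : ∃ m', m = m' + 1 := ⟨m - 1, by omega⟩
      have hstep := heStep (m' + 2) i h1 (by omega)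
      rw [show m' + 2 - 1 = m' + 1 from by omega] at hstep
      have hIH := ihm i h1 (by omega)
      rw [show m' + 1 - 1 = m' from by omega] at hIH
      rw [show m' + 1 + 1 = m' + 2 from by omega]
      rw [show m' + 2 - 1 = m' + 1 from by omega]
      rw [hstep, hIH, Finset.sum_Icc_succ_top (show i + 1 ≤ m' + 1 by omega)]
      have htop : e (m' + 1) (m' + 2) = -(c.T (m' + 1)) := by
        have h := heBase (m' + 2) (by omega)
        rwa [show m' + 2 - 1 = m' + 1 from by omega] at h
      have hv : ∀ v ∈ Finset.Icc (i + 1) m', e v (m' + 2) =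
          (e v (m' + 1)).comp
            ((LinearMap.id : B' →ₗ[𝕂] B') - (c.Sb (m' + 1)).comp (c.T (m' + 1))) := by
        intro v hv'
        simp only [Finset.mem_Icc] at hv'
        have h := heStep (m' + 2) v (by omega) (by omega)
        rwa [show m' + 2 - 1 = m' + 1 from by omega] at h
      have hv2 : ∀ v ∈ Finset.Icc (i + 1) m', (c.Sb v).comp (e v (m' + 2))
          = (c.Sb v).comp ((e v (m' + 1)).comp
            ((LinearMap.id : B' →ₗ[𝕂] B') - (c.Sb (m' + 1)).comp (c.T (m' + 1)))) := by
        intro v hv'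
        rw [hv v hv']
      rw [Finset.sum_congr rfl hv2, htop]
      ext y
      simp only [LinearMap.comp_apply, LinearMap.neg_apply, LinearMap.add_apply,
        LinearMap.sub_apply, LinearMap.id_apply, LinearMap.sum_apply, map_add, map_sub,
        map_neg, map_sum, Finset.sum_sub_distrib]
      abel

theorem EA (kk : ℕ) (e : ℕ → ℕ → B' →ₗ[𝕂] B)
    (heBase : ∀ m, 2 ≤ m → e (m - 1) m = -(c.T (m - 1)))
    (heStep : ∀ m i, 1 ≤ i → i + 2 ≤ m →
      e i m = (e i (m - 1)).comp
        ((LinearMap.id : B' →ₗ[𝕂] B') - (c.Sb (m - 1)).comp (c.T (m - 1))))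
    (hTz : ∀ v, kk + 2 ≤ v → c.T v = 0) :
    ∀ m, kk + 2 ≤ m → ∀ i, 1 ≤ i → i ≤ kk + 1 →
      c.E i m = (e i (kk + 2)).comp (c.Sb m) := by
  intro m hm
  have key : ∀ t, ∀ i, 1 ≤ i → i + t = kk + 1 →
      c.E i m = (e i (kk + 2)).comp (c.Sb m) := by
    intro t
    induction t using Nat.strong_induction_on with
    | _ t iht =>
    intro i h1 h2
    obtain ⟨n, hn⟩ : ∃ n, m = n + 1 := ⟨m - 1, by omega⟩
    subst hn
    have hkn : kk + 1 ≤ n := by omega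
    rw [c.hErec n i h1 (by omega)]
    have hsets : Finset.Icc (i + 1) (n + 1)
        = Finset.Icc (i + 1) (kk + 1) ∪ Finset.Icc (kk + 2) (n + 1) := by
      ext v
      simp only [Finset.mem_Icc, Finset.mem_union]
      omega
    have hdisj : Disjoint (Finset.Icc (i + 1) (kk + 1)) (Finset.Icc (kk + 2) (n + 1)) := by
      rw [Finset.disjoint_left]
      intro v hv1 hv2
      simp only [Finset.mem_Icc] at hv1 hv2
      omega
    rw [hsets, Finset.sum_union hdisj]
    have hhigh : ∑ v ∈ Finset.Icc (kk + 2) (n + 1), (c.Sb v).comp (c.E v (n + 1))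
        = c.Sb (n + 1) := by
      rw [Finset.sum_Icc_succ_top (by omega : kk + 2 ≤ n + 1)]
      have hzero : ∀ v ∈ Finset.Icc (kk + 2) n, (c.Sb v).comp (c.E v (n + 1)) = 0 := by
        intro v hv'
        simp only [Finset.mem_Icc] at hv'
        have hEv : c.E v (n + 1) = 0 := by
          rw [c.hErec n v (by omega) (by omega), hTz v (by omega)]
          simp
        rw [hEv, LinearMap.comp_zero]
      rw [Finset.sum_eq_zero hzero, zero_add, c.hEdiag n, LinearMap.comp_id]
    have hlow : ∀ v ∈ Finset.Icc (i + 1) (kk + 1), (c.Sb v).comp (c.E v (n + 1))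
        = ((c.Sb v).comp (e v (kk + 2))).comp (c.Sb (n + 1)) := by
      intro v hv'
      simp only [Finset.mem_Icc] at hv'
      rw [iht (kk + 1 - v) (by omega) v (by omega) (by omega), ← LinearMap.comp_assoc]
    rw [hhigh, Finset.sum_congr rfl hlow]
    have heq := c.eId e heBase heStep (kk + 2) i h1 (by omega)
    rw [show kk + 2 - 1 = kk + 1 from by omega] at heq
    rw [heq]
    ext y
    simp only [LinearMap.comp_apply, LinearMap.neg_apply, LinearMap.add_apply,
      LinearMap.sum_apply, LinearMap.id_apply, map_add, map_sum]
    abel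
  intro i h1 h2
  exact key (kk + 1 - i) i h1 (by omega)

theorem mainD (kk : ℕ) (e : ℕ → ℕ → B' →ₗ[𝕂] B)
    (heBase : ∀ m, 2 ≤ m → e (m - 1) m = -(c.T (m - 1)))
    (heStep : ∀ m i, 1 ≤ i → i + 2 ≤ m →
      e i m = (e i (m - 1)).comp
        ((LinearMap.id : B' →ₗ[𝕂] B') - (c.Sb (m - 1)).comp (c.T (m - 1))))
    (hTz : ∀ v, kk + 2 ≤ v → c.T v = 0)
    (H : ℕ → B' →ₗ[𝕂] B) (hH1 : H 1 = e 1 (kk + 2))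
    (hH : ∀ a, 2 ≤ a → a ≤ kk + 1 →
      H a = ∑ b ∈ Finset.Icc (a - 1) kk, (c.M (a - 1) b).comp (e (b + 1) (kk + 2))) :
    ∀ a, 1 ≤ a → a ≤ kk + 1 → ∀ l, a ≤ l →
      c.M a (kk + 1 + l) = ∑ b ∈ Finset.Icc 1 a, (H (a - b + 1)).comp (c.Sb (kk + 2 + l - b)) := by
  intro a
  induction a with
  | zero => omega
  | succ a ih =>
    intro _ ha2 l hal
    rcases Nat.eq_zero_or_pos a with rfl | hapos
    · have hl1 : 1 ≤ l := hal
      rw [show kk + 1 + l = kk + l + 1 from by omega]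
      rw [c.hM1 (kk + l) (by omega)]
      rw [c.EA kk e heBase heStep hTz (kk + l + 1) (by omega) 1 le_rfl (by omega)]
      rw [Finset.Icc_self, Finset.sum_singleton]
      rw [show 0 + 1 - 1 + 1 = 1 from rfl, show kk + 2 + l - 1 = kk + l + 1 from by omega, hH1]
    · obtain ⟨l', rfl⟩ : ∃ l', l = l' + 1 := ⟨l - 1, by omega⟩
      have hrec := c.hMrec (kk + l' + 1) (a + 1) (by omega) (by omega)
      rw [show a + 1 - 1 = a from by omega] at hrec
      rw [show kk + 1 + (l' + 1) = kk + l' + 1 + 1 from by omega]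
      rw [hrec]
      rw [Finset.sum_Icc_succ_top (show a ≤ kk + l' + 1 by omega)]
      rw [c.hEdiag (kk + l' + 1), LinearMap.comp_id]
      have hsets : Finset.Icc a (kk + l')
          = Finset.Icc a kk ∪ Finset.Icc (kk + 1) (kk + l') := by
        ext v
        simp only [Finset.mem_Icc, Finset.mem_union]
        omega
      have hdisj : Disjoint (Finset.Icc a kk) (Finset.Icc (kk + 1) (kk + l')) := by
        rw [Finset.disjoint_left]
        intro v hv1 hv2
        simp only [Finset.mem_Icc] at hv1 hv2
        omega
      rw [hsets, Finset.sum_union hdisj]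
      have hmid : ∑ b ∈ Finset.Icc (kk + 1) (kk + l'),
          (c.M a b).comp (c.E (b + 1) (kk + l' + 1 + 1)) = 0 := by
        apply Finset.sum_eq_zero
        intro b hb
        simp only [Finset.mem_Icc] at hb
        have hEb : c.E (b + 1) (kk + l' + 1 + 1) = 0 := by
          rw [c.hErec (kk + l' + 1) (b + 1) (by omega) (by omega), hTz (b + 1) (by omega)]
          simp
        rw [hEb, LinearMap.comp_zero]
      have hlowc : ∀ b ∈ Finset.Icc a kk, (c.M a b).comp (c.E (b + 1) (kk + l' + 1 + 1))
          = ((c.M a b).comp (e (b + 1) (kk + 2))).comp (c.Sb (kk + l' + 1 + 1)) := by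
        intro b hb
        simp only [Finset.mem_Icc] at hb
        rw [c.EA kk e heBase heStep hTz (kk + l' + 1 + 1) (by omega) (b + 1) (by omega)
          (by omega), ← LinearMap.comp_assoc]
      rw [Finset.sum_congr rfl hlowc, hmid, add_zero]
      have hsumc : ∑ b ∈ Finset.Icc a kk,
            ((c.M a b).comp (e (b + 1) (kk + 2))).comp (c.Sb (kk + l' + 1 + 1))
          = (H (a + 1)).comp (c.Sb (kk + l' + 1 + 1)) := by
        rw [hH (a + 1) (by omega) ha2, show a + 1 - 1 = a from by omega]
        ext y
        simp [LinearMap.sum_apply]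
      rw [hsumc]
      have hIH := ih hapos (by omega) l' (by omega)
      rw [show kk + 1 + l' = kk + l' + 1 from by omega] at hIH
      rw [hIH]
      have hRHS : ∑ b ∈ Finset.Icc 1 (a + 1), (H (a + 1 - b + 1)).comp
            (c.Sb (kk + 2 + (l' + 1) - b))
          = (H (a + 1)).comp (c.Sb (kk + l' + 1 + 1))
            + ∑ b ∈ Finset.Icc 1 a, (H (a - b + 1)).comp (c.Sb (kk + 2 + l' - b)) := by
        rw [← Finset.Ico_add_one_right_eq_Icc,
          Finset.sum_eq_sum_Ico_succ_bot (by omega : 1 < a + 1 + 1), Finset.Ico_add_one_right_eq_Icc]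
        congr 1
        · rw [show a + 1 - 1 + 1 = a + 1 from by omega,
            show kk + 2 + (l' + 1) - 1 = kk + l' + 1 + 1 from by omega]
        · rw [sum_Icc_shift (fun b => (H (a + 1 - b + 1)).comp
            (c.Sb (kk + 2 + (l' + 1) - b))) 1 a]
          refine Finset.sum_congr rfl fun b hb => ?_
          simp only [Finset.mem_Icc] at hb
          rw [show a + 1 - (b + 1) + 1 = a - b + 1 from by omega,
            show kk + 2 + (l' + 1) - (b + 1) = kk + 2 + l' - b from by omega]
      rw [hRHS]

end Ctx
end Stmt11Aux

theorem stmt_11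
    {𝕂 : Type*} [RCLike 𝕂]
    {B B' : Type*} [AddCommGroup B] [Module 𝕂 B]
    [AddCommGroup B'] [Module 𝕂 B']
    (L : ℕ → B →ₗ[𝕂] B')
    (Sb S : ℕ → B →ₗ[𝕂] B')
    (N Nc : ℕ → Submodule 𝕂 B)
    (R Rc : ℕ → Submodule 𝕂 B')
    (P : ℕ → B' →ₗ[𝕂] B')
    (T : ℕ → B' →ₗ[𝕂] B)
    (E M : ℕ → ℕ → B →ₗ[𝕂] B)
    (hL : ∃ i, L i ≠ 0)
    (hN0 : N 0 = ⊤) (hRc0 : Rc 0 = ⊤)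
    (hSb1 : Sb 1 = L 0)
    (hSbrec : ∀ k, 1 ≤ k → Sb (k + 1) = ∑ i ∈ Finset.Icc 1 k, (L i).comp (M i k))
    (hSdef : ∀ k, S (k + 1) = Sb (k + 1) - ∑ i ∈ Finset.Icc 1 k, (P i).comp (Sb (k + 1)))
    (hNdef : ∀ k, N (k + 1) = LinearMap.ker (S (k + 1)) ⊓ N k)
    (hRdef : ∀ k, R (k + 1) = Submodule.map (S (k + 1)) (N k))
    (hNcompl : ∀ k, Disjoint (Nc (k + 1)) (N (k + 1)) ∧ Nc (k + 1) ⊔ N (k + 1) = N k)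
    (hRcompl : ∀ k, Disjoint (R (k + 1)) (Rc (k + 1)) ∧ R (k + 1) ⊔ Rc (k + 1) = Rc k)
    (hPrange : ∀ i, 1 ≤ i → LinearMap.range (P i) ≤ R i)
    (hPid : ∀ i, 1 ≤ i → ∀ y ∈ R i, P i y = y)
    (hPzeroRc : ∀ i, 1 ≤ i → ∀ y ∈ Rc i, P i y = 0)
    (hPzeroR : ∀ i j, 1 ≤ j → j < i → ∀ y ∈ R j, P i y = 0)
    (hTrange : ∀ i, 1 ≤ i → ∀ y, T i y ∈ Nc i)
    (hTS : ∀ i, 1 ≤ i → ∀ x ∈ Nc i, T i (S i x) = x)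
    (hST : ∀ i, 1 ≤ i → ∀ y, S i (T i y) = P i y)
    (hE11 : E 1 1 = LinearMap.id)
    (hEdiag : ∀ k, E (k + 1) (k + 1) = LinearMap.id)
    (hErec : ∀ k i, 1 ≤ i → i ≤ k →
      E i (k + 1) = -((T i).comp (∑ v ∈ Finset.Icc (i + 1) (k + 1), (Sb v).comp (E v (k + 1)))))
    (hM11 : M 1 1 = LinearMap.id)
    (hM1 : ∀ k, 1 ≤ k → M 1 (k + 1) = E 1 (k + 1))
    (hMrec : ∀ k a, 2 ≤ a → a ≤ k + 1 →
      M a (k + 1) = ∑ b ∈ Finset.Icc (a - 1) k, (M (a - 1) b).comp (E (b + 1) (k + 1)))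
    (e : ℕ → ℕ → B' →ₗ[𝕂] B)
    (heBase : ∀ m, 2 ≤ m → e (m - 1) m = -(T (m - 1)))
    (heStep : ∀ m i, 1 ≤ i → i + 2 ≤ m →
      e i m = (e i (m - 1)).comp ((LinearMap.id : B' →ₗ[𝕂] B') - (Sb (m - 1)).comp (T (m - 1))))
    (rank : B → ℕ∞)
    (hrank : ∀ b0 : B, rank b0 = sSup {x : ℕ∞ | ∃ m : ℕ, 1 ≤ m ∧
      (∃ b : ℕ → B, b 0 = b0 ∧
        ∀ l, l + 1 ≤ m → ∑ i ∈ Finset.range (l + 1), L i (b (l - i)) = 0) ∧ x = (m : ℕ∞)})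
    (k : ℕ)
    (hstab : (∀ b0 : B, rank b0 ≤ (k : ℕ∞) ∨ rank b0 = ⊤) ∧ ∃ b0 : B, rank b0 = (k : ℕ∞))
    (H : ℕ → B' →ₗ[𝕂] B)
    (hH1 : H 1 = e 1 (k + 2))
    (hH : ∀ a, 2 ≤ a → a ≤ k + 1 →
      H a = ∑ b ∈ Finset.Icc (a - 1) k, (M (a - 1) b).comp (e (b + 1) (k + 2))) :
    ∀ l, k + 1 ≤ l → ∀ a, 1 ≤ a → a ≤ k + 1 →
      M a (k + 1 + l) = ∑ b ∈ Finset.Icc 1 a, (H (a - b + 1)).comp (Sb (k + 2 + l - b)) := by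
  intro l hl a ha1 ha2
  let c : Stmt11Aux.Ctx 𝕂 B B' :=
    { L := L, Sb := Sb, S := S, N := N, Nc := Nc, R := R, Rc := Rc, P := P, T := T,
      E := E, M := M,
      hN0 := hN0, hSb1 := hSb1, hSbrec := hSbrec, hSdef := hSdef, hNdef := hNdef,
      hRdef := hRdef,
      hNcdisj := fun n => (hNcompl n).1, hNcsup := fun n => (hNcompl n).2,
      hRcsup := fun n => (hRcompl n).2,
      hPrange := hPrange, hPid := hPid, hPzeroRc := hPzeroRc, hPzeroR := hPzeroR,
      hTrange := hTrange, hST := hST, hEdiag := hEdiag, hErec := hErec,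
      hM11 := hM11, hM1 := hM1, hMrec := hMrec }
  have hTz : ∀ v, k + 2 ≤ v → c.T v = 0 := c.Tzero k rank hrank hstab.1
  exact c.mainD k e heBase heStep hTz H hH1 hH a ha1 ha2 l (le_trans ha2 hl)
end
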